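/- arXiv:1907.00289 — 12 statements merged into one kernel-verified Lean document; each statement's English description precedes it below -/
import Mathlib

section
/- Let f : ℝⁿ → ℝ be differentiable, L-smooth and μ-strongly convex with 0 ≤ μ < L and minimizer x*. Suppose a₀ = 1 and a_k²/(A_k(μ₀ + μA_k)) = 1/L for all k ≥ 1; suppose the points y_i satisfy f(y_i) ≤ f(x_i) − ‖∇f(x_i)‖²/(2L) for all i, and the gradient-query points satisfy ⟨∇f(x_i), (A_{i−1} + a_i')x_i − A_{i−1}y_{i−1} − a_i'v_{i−1}⟩ = 0 for all 1 ≤ i ≤ k. Then f(y_k) − f(x*) ≤ min{4/((k+1)(k+2)), (1 − √(μ/L))^k} · ((L − μ)/2)‖x* − x₀‖². -/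
open RealInnerProductSpace Finset

section Helpers

variable {E : Type*} [NormedAddCommGroup E] [InnerProductSpace ℝ E]

/-- Quadratic completion identity. -/
lemma quad_expand (σ τ c : ℝ) (w xx g w' : E)
    (hw' : (σ + τ) • w' = σ • w + τ • xx - c • g) (u : E) :
    σ/2*‖u-w‖^2 + c*⟪g,u-xx⟫ + τ/2*‖u-xx‖^2
      = (σ/2*‖w'-w‖^2 + c*⟪g,w'-xx⟫ + τ/2*‖w'-xx‖^2) + (σ+τ)/2*‖u-w'‖^2 := by
  have h1 : ∀ p : E, ‖u-p‖^2 = ‖u-w'‖^2 + 2*⟪u-w', w'-p⟫ + ‖w'-p‖^2 := by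
    intro p
    have := norm_add_sq_real (u-w') (w'-p)
    rw [sub_add_sub_cancel] at this
    linarith
  have h2 : ⟪g, u - xx⟫ = ⟪g,u-w'⟫ + ⟪g,w'-xx⟫ := by
    rw [← inner_add_right, sub_add_sub_cancel]
  have hz : σ•(w'-w)+τ•(w'-xx)+c•g = 0 := by
    have : σ•(w'-w)+τ•(w'-xx)+c•g = (σ+τ)•w' - (σ•w+τ•xx-c•g) := by module
    rw [this, hw', sub_self]
  have h3 : σ*⟪u-w',w'-w⟫ + τ*⟪u-w',w'-xx⟫ + c*⟪g, u-w'⟫ = 0 := by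
    have : ⟪u-w', σ•(w'-w)+τ•(w'-xx)+c•g⟫ = (0:ℝ) := by rw [hz, inner_zero_right]
    rw [inner_add_right, inner_add_right, real_inner_smul_right, real_inner_smul_right,
      real_inner_smul_right, real_inner_comm g (u-w')] at this
    linarith
  have hgw := real_inner_comm (u-w') g
  rw [h1 w, h1 xx, h2]
  linarith [mul_comm c (⟪g,u-w'⟫:ℝ)]

omit [InnerProductSpace ℝ E] in
lemma min_eq_quad (s : ℝ) (hs : 0 < s) (q : E → ℝ) (w vv : E)
    (hq : ∀ u, q u = q w + s/2*‖u-w‖^2) (hvv : ∀ u, q vv ≤ q u) : vv = w := by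
  have h1 := hq vv
  have h2 := hvv w
  have h3 : s/2*‖vv-w‖^2 ≤ 0 := by linarith
  have h4 : ‖vv-w‖^2 ≤ 0 := by nlinarith
  have : vv - w = 0 := by
    have h5 : ‖vv-w‖^2 = 0 := le_antisymm h4 (sq_nonneg _)
    simpa [pow_eq_zero_iff] using h5
  exact sub_eq_zero.mp this

end Helpers

set_option maxHeartbeats 2000000 in
/-- **ADGT accelerated convergence (Theorem 1 of the paper).**
If `f` is `L`-smooth and `μ`-strongly convex with minimizer `x*`, the weights satisfy
`a 0 = 1` and `a k ^ 2 / (A k * (μ₀ + μ * A k)) = 1 / L` for `k ≥ 1` (with `μ₀ = L - μ`),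
the points `y i` satisfy `f (y i) ≤ f (x i) - ‖∇f(x i)‖² / (2L)`, and the gradient query
points satisfy the condition `⟪∇f(x i), (A (i-1) + a' i) • x i - A (i-1) • y (i-1)
- a' i • v (i-1)⟫ = 0`, then
`f (y k) - f x* ≤ min (4/((k+1)(k+2))) ((1 - √(μ/L))^k) · ((L-μ)/2)‖x* - x₀‖²`. -/
theorem accelerated_convergence {n : ℕ} (f : EuclideanSpace ℝ (Fin n) → ℝ) (L μ : ℝ)
    (hL : 0 < L) (hμ : 0 ≤ μ) (hμL : μ < L)
    (hdiff : Differentiable ℝ f)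
    (hsmooth : ∀ x y : EuclideanSpace ℝ (Fin n),
      f y ≤ f x + ⟪gradient f x, y - x⟫ + L / 2 * ‖y - x‖ ^ 2)
    (hstrong : ∀ x y : EuclideanSpace ℝ (Fin n),
      f y ≥ f x + ⟪gradient f x, y - x⟫ + μ / 2 * ‖y - x‖ ^ 2)
    (xstar : EuclideanSpace ℝ (Fin n)) (hstar : ∀ x, f xstar ≤ f x)
    (a A a' : ℕ → ℝ) (ha : ∀ i, 0 < a i)
    (hA : ∀ i, A i = ∑ j ∈ Finset.range (i + 1), a j)
    (ha' : ∀ i, a' i = a i * ((L - μ) + μ * A (i - 1)) / ((L - μ) + μ * A i))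
    (ha0 : a 0 = 1)
    (hak : ∀ k, 1 ≤ k → a k ^ 2 / (A k * ((L - μ) + μ * A k)) = 1 / L)
    (x y v : ℕ → EuclideanSpace ℝ (Fin n))
    (m : ℕ → EuclideanSpace ℝ (Fin n) → ℝ)
    (hm : ∀ i u, m i u = ∑ j ∈ Finset.range (i + 1),
        a j * (⟪gradient f (x j), u - x j⟫ + μ / 2 * ‖u - x j‖ ^ 2)
        + (L - μ) / 2 * ‖u - x 0‖ ^ 2)
    (hv : ∀ i u, m i (v i) ≤ m i u)
    (hy : ∀ i, f (y i) ≤ f (x i) - 1 / (2 * L) * ‖gradient f (x i)‖ ^ 2)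
    (hx : ∀ i, 1 ≤ i →
      ⟪gradient f (x i),
        (A (i - 1) + a' i) • x i - A (i - 1) • y (i - 1) - a' i • v (i - 1)⟫ = 0)
    (k : ℕ) :
    f (y k) - f xstar ≤
      min (4 / (((k : ℝ) + 1) * ((k : ℝ) + 2))) ((1 - Real.sqrt (μ / L)) ^ k)
        * ((L - μ) / 2 * ‖xstar - x 0‖ ^ 2) := by
  have hA1 : ∀ i, 1 ≤ A i := by
    intro i
    rw [hA]
    have h := Finset.single_le_sum (f := a) (fun j _ => (ha j).le)
      (Finset.mem_range.mpr (Nat.succ_pos i))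
    linarith [ha0 ▸ h]
  have hApos : ∀ i, 0 < A i := fun i => lt_of_lt_of_le one_pos (hA1 i)
  have hσpos : ∀ i, 0 < L - μ + μ * A i := by
    intro i; nlinarith [hApos i]
  have hσL : ∀ i, L ≤ L - μ + μ * A i := by
    intro i; nlinarith [hA1 i]
  have hA0 : A 0 = 1 := by rw [hA]; simp [ha0]
  have hAsucc : ∀ i, A (i+1) = A i + a (i+1) := by
    intro i; rw [hA, hA, Finset.sum_range_succ]
  have hσsucc : ∀ i, L - μ + μ * A (i+1) = (L - μ + μ * A i) + a (i+1) * μ := by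
    intro i; rw [hAsucc]; ring
  have hm0 : ∀ u, m 0 u = ⟪gradient f (x 0), u - x 0⟫ + μ/2*‖u - x 0‖^2
      + (L-μ)/2*‖u - x 0‖^2 := by
    intro u; rw [hm]; simp [ha0]
  have hmsucc : ∀ i u, m (i+1) u = m i u
      + a (i+1) * (⟪gradient f (x (i+1)), u - x (i+1)⟫ + μ/2*‖u - x (i+1)‖^2) := by
    intro i u; rw [hm, hm, Finset.sum_range_succ]; ring
  -- quadratic structure of the models
  have hquad : ∀ i u, m i u = m i (v i) + (L - μ + μ * A i)/2 * ‖u - v i‖^2 := by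
    intro i
    induction i with
    | zero =>
      set w' : EuclideanSpace ℝ (Fin n) := x 0 - L⁻¹ • gradient f (x 0) with hw'def
      have hw' : ((L-μ) + μ) • w' = (L-μ) • (x 0) + μ • (x 0) - (1:ℝ) • gradient f (x 0) := by
        have hLμ : (L-μ)+μ = L := by ring
        rw [hLμ, hw'def, smul_sub, smul_smul, mul_inv_cancel₀ hL.ne']
        module
      have key := fun u => quad_expand (L-μ) μ 1 (x 0) (x 0) (gradient f (x 0)) w' hw' u
      have hform : ∀ u, m 0 u = (L-μ)/2*‖u - x 0‖^2
          + 1*⟪gradient f (x 0), u - x 0⟫ + μ/2*‖u - x 0‖^2 := by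
        intro u; rw [hm0]; ring
      have hqw : ∀ u, m 0 u = m 0 w' + ((L-μ)+μ)/2 * ‖u - w'‖^2 := by
        intro u; rw [hform u, hform w']; linarith [key u]
      have hv0 : v 0 = w' := min_eq_quad ((L-μ)+μ) (by linarith) (m 0) w' (v 0) hqw (hv 0)
      intro u
      rw [hqw u, ← hv0, hA0]
      ring_nf
    | succ i ih =>
      have hs' : (0:ℝ) < L - μ + μ * A (i+1) := hσpos (i+1)
      set Z : EuclideanSpace ℝ (Fin n) :=
        (L - μ + μ * A i) • v i + (a (i+1) * μ) • x (i+1) - a (i+1) • gradient f (x (i+1))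
        with hZdef
      set w' : EuclideanSpace ℝ (Fin n) := (L - μ + μ * A (i+1))⁻¹ • Z with hw'def
      have hw' : ((L - μ + μ * A i) + a (i+1) * μ) • w' = Z := by
        rw [← hσsucc i, hw'def]
        exact smul_inv_smul₀ hs'.ne' Z
      have key := fun u => quad_expand (L - μ + μ * A i) (a (i+1) * μ) (a (i+1))
        (v i) (x (i+1)) (gradient f (x (i+1))) w' hw' u
      have hform : ∀ u, m (i+1) u = m i (v i) + ((L - μ + μ * A i)/2 * ‖u - v i‖^2
          + a (i+1) * ⟪gradient f (x (i+1)), u - x (i+1)⟫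
          + (a (i+1) * μ)/2 * ‖u - x (i+1)‖^2) := by
        intro u; rw [hmsucc i u, ih u]; ring
      have hqw : ∀ u, m (i+1) u = m (i+1) w'
          + ((L - μ + μ * A i) + a (i+1) * μ)/2 * ‖u - w'‖^2 := by
        intro u; rw [hform u, hform w']; linarith [key u]
      have hvs : v (i+1) = w' := min_eq_quad _ (by rw [hσsucc i] at hs'; exact hs')
        (m (i+1)) w' (v (i+1)) hqw (hv (i+1))
      intro u
      rw [hqw u, ← hvs, hσsucc i]

  -- lower bound helper
  have lb_quad : ∀ (g d : EuclideanSpace ℝ (Fin n)),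
      -(1/(2*L)) * ‖g‖^2 ≤ ⟪g,d⟫ + L/2*‖d‖^2 := by
    intro g d
    have hCS := (abs_le.mp (abs_real_inner_le_norm g d)).1
    have e : 1/(2*L)*(L*‖d‖-‖g‖)^2 = L/2*‖d‖^2 - ‖g‖*‖d‖ + 1/(2*L)*‖g‖^2 := by
      field_simp; ring
    have hpos : 0 ≤ 1/(2*L)*(L*‖d‖-‖g‖)^2 := by positivity
    linarith
  -- main invariant
  have hkey : ∀ i, A i * f (y i) ≤ m i (v i) + ∑ j ∈ Finset.range (i+1), a j * f (x j) := by
    intro i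
    induction i with
    | zero =>
      have hlb : -(1/(2*L)) * ‖gradient f (x 0)‖^2 ≤ m 0 (v 0) := by
        rw [hm0]
        have h := lb_quad (gradient f (x 0)) (v 0 - x 0)
        have e : μ/2*‖v 0 - x 0‖^2 + (L-μ)/2*‖v 0 - x 0‖^2 = L/2*‖v 0 - x 0‖^2 := by ring
        linarith
      rw [hA0, Finset.sum_range_one, ha0]
      linarith [hy 0]
    | succ i ih =>
      have hs'pos : (0:ℝ) < L - μ + μ * A (i+1) := hσpos (i+1)
      have hspos : (0:ℝ) < L - μ + μ * A i := hσpos i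
      set c := a (i+1) with hc
      set gi := gradient f (x (i+1)) with hgi
      set xx := x (i+1) with hxx
      set S : ℝ := L - μ + μ * A i with hS
      set S' : ℝ := L - μ + μ * A (i+1) with hS'
      have hS'S : S' = S + c*μ := hσsucc i
      have hS'ne : S' ≠ 0 := hs'pos.ne'
      set w : EuclideanSpace ℝ (Fin n) := S'⁻¹ • (S • v i + (c*μ) • xx) with hwdef
      set w'' : EuclideanSpace ℝ (Fin n) := S'⁻¹ • (S • v i + (c*μ) • xx - c • gi) with hw''def
      have hw' : (S + c*μ) • w'' = S • v i + (c*μ) • xx - c • gi := by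
        rw [← hS'S, hw''def]
        exact smul_inv_smul₀ hS'ne _
      have key := fun u => quad_expand S (c*μ) c (v i) xx gi w'' hw' u
      have hwS : S' • w = S • v i + (c*μ) • xx := smul_inv_smul₀ hS'ne _
      have hdiff2 : w - w'' = (S'⁻¹ * c) • gi := by
        rw [hwdef, hw''def, ← smul_sub, sub_sub_cancel, smul_smul]
      have hnorm : ‖w - w''‖^2 = (S'⁻¹ * c)^2 * ‖gi‖^2 := by
        rw [hdiff2, norm_smul, mul_pow, Real.norm_eq_abs, sq_abs]
      have hlow : ∀ u, c*⟪gi, w - xx⟫ - c^2/(2*S')*‖gi‖^2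
          ≤ S/2*‖u - v i‖^2 + c*⟪gi,u - xx⟫ + c*μ/2*‖u - xx‖^2 := by
        intro u
        have k1 := key u
        have k2 := key w
        have e1 : (S + c*μ)/2 * ‖w - w''‖^2 = c^2/(2*S')*‖gi‖^2 := by
          rw [← hS'S, hnorm]
          field_simp
        have p1 : 0 ≤ (S + c*μ)/2 * ‖u - w''‖^2 :=
          mul_nonneg (by rw [← hS'S]; linarith) (sq_nonneg _)
        have p2 : 0 ≤ S/2 * ‖w - v i‖^2 := mul_nonneg (by linarith) (sq_nonneg _)
        have p3 : 0 ≤ c*μ/2 * ‖w - xx‖^2 :=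
          mul_nonneg (by have := (ha (i+1)).le; rw [← hc] at this; positivity) (sq_nonneg _)
        linarith
      have ha'' : a' (i+1) = c * S / S' := by
        have h := ha' (i+1)
        simpa using h
      have hvec : c • (w - xx) = (c*S/S') • (v i - xx) := by
        have h1 : c • (w - xx) = (c/S') • (S' • (w - xx)) := by
          rw [smul_smul]
          congr 1
          field_simp
        have h2 : S' • (w - xx) = S • v i + (c*μ) • xx - S' • xx := by
          rw [smul_sub, hwS]
        have h3 : S • v i + (c*μ) • xx - S' • xx = S • (v i - xx) := by
          rw [hS'S]; module
        rw [h1, h2, h3, smul_smul]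
        congr 1
        ring
      have hinner : c * ⟪gi, w - xx⟫ = a' (i+1) * ⟪gi, v i - xx⟫ := by
        calc c*⟪gi,w-xx⟫ = ⟪gi, c•(w-xx)⟫ := (real_inner_smul_right gi _ c).symm
          _ = ⟪gi, (c*S/S')•(v i - xx)⟫ := by rw [hvec]
          _ = (c*S/S')*⟪gi, v i - xx⟫ := real_inner_smul_right gi _ _
          _ = a' (i+1)*⟪gi, v i - xx⟫ := by rw [ha'']
      have hx1 := hx (i+1) (Nat.le_add_left 1 i)
      simp only [Nat.add_sub_cancel] at hx1
      have hxexp : a' (i+1) * ⟪gi, v i - xx⟫ = A i * ⟪gi, xx - y i⟫ := by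
        rw [inner_sub_right, inner_sub_right, real_inner_smul_right,
          real_inner_smul_right, real_inner_smul_right] at hx1
        rw [inner_sub_right, inner_sub_right]
        linear_combination -hx1
      have hst := hstrong xx (y i)
      have hst2 : A i * (f xx - f (y i)) ≤ A i * ⟪gi, xx - y i⟫ := by
        have h1 : f xx - f (y i) ≤ ⟪gi, xx - y i⟫ := by
          have hmu : 0 ≤ μ * ‖y i - xx‖^2 := mul_nonneg hμ (sq_nonneg _)
          have hneg : ⟪gi, xx - y i⟫ = -⟪gi, y i - xx⟫ := by
            rw [show xx - y i = -(y i - xx) from (neg_sub _ _).symm, inner_neg_right]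
          rw [hneg]
          rw [← hgi] at hst
          linarith
        exact mul_le_mul_of_nonneg_left h1 (hApos i).le
      have hc2 : c^2/(2*S')*‖gi‖^2 = A (i+1)/(2*L)*‖gi‖^2 := by
        have h := hak (i+1) (Nat.le_add_left 1 i)
        rw [← hS', ← hc] at h
        have h1 : A (i+1) ≠ 0 := (hApos (i+1)).ne'
        have e : c^2/(2*S') = A (i+1)/(2*L) := by
          rw [div_eq_div_iff (by positivity) (by positivity)]
          rw [div_eq_div_iff (by positivity) (by positivity)] at h
          linarith [h]
        rw [e]
      have hform2 : m (i+1) (v (i+1)) = m i (v i) + (S/2*‖v (i+1) - v i‖^2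
          + c*⟪gi, v (i+1) - xx⟫ + c*μ/2*‖v (i+1) - xx‖^2) := by
        rw [hmsucc i, hquad i]; ring
      have hlow2 := hlow (v (i+1))
      have hyA : A (i+1) * f (y (i+1)) ≤ A (i+1) * f xx - A (i+1)/(2*L)*‖gi‖^2 := by
        have h' := mul_le_mul_of_nonneg_left (hy (i+1)) (hApos (i+1)).le
        rw [← hxx, ← hgi] at h'
        have e : A (i+1) * (f xx - 1/(2*L)*‖gi‖^2)
            = A (i+1)*f xx - A (i+1)/(2*L)*‖gi‖^2 := by ring
        linarith
      have hAf : A (i+1) * f xx = A i * f xx + c * f xx := by rw [hAsucc]; ring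
      rw [Finset.sum_range_succ, ← hc, ← hxx]
      linarith
  -- bound at xstar
  have hfinal : A k * (f (y k) - f xstar) ≤ (L-μ)/2 * ‖xstar - x 0‖^2 := by
    have h1 := hkey k
    have h2 := hv k xstar
    have h3 : m k xstar ≤ ∑ j ∈ Finset.range (k+1), a j * (f xstar - f (x j))
        + (L-μ)/2*‖xstar - x 0‖^2 := by
      rw [hm]
      apply add_le_add ?_ le_rfl
      apply Finset.sum_le_sum
      intro j _
      have hst := hstrong (x j) xstar
      have hmu : 0 ≤ μ * ‖xstar - x j‖^2 := mul_nonneg hμ (sq_nonneg _)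
      have : ⟪gradient f (x j), xstar - x j⟫ + μ/2*‖xstar - x j‖^2 ≤ f xstar - f (x j) := by
        linarith
      exact mul_le_mul_of_nonneg_left this (ha j).le
    have h4 : ∑ j ∈ Finset.range (k+1), a j * (f xstar - f (x j))
        = A k * f xstar - ∑ j ∈ Finset.range (k+1), a j * f (x j) := by
      rw [hA, Finset.sum_mul]
      rw [← Finset.sum_sub_distrib]
      apply Finset.sum_congr rfl
      intro j _
      ring
    linarith
  -- growth bounds
  have hq2 : Real.sqrt (μ/L)^2 = μ/L := Real.sq_sqrt (by positivity)
  have hqnn : 0 ≤ Real.sqrt (μ/L) := Real.sqrt_nonneg _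
  have hq1 : Real.sqrt (μ/L) < 1 := by
    nlinarith [(div_lt_one hL).mpr hμL, hq2, hqnn]
  have haA : ∀ i, a (i+1)^2 = A (i+1) * (L - μ + μ * A (i+1)) / L := by
    intro i
    have h := hak (i+1) (Nat.le_add_left 1 i)
    have hz : (0:ℝ) < A (i+1) * (L - μ + μ * A (i+1)) := mul_pos (hApos _) (hσpos _)
    rw [div_eq_div_iff hz.ne' hL.ne'] at h
    rw [eq_div_iff hL.ne']
    linarith
  have growth1 : ∀ i : ℕ, ((i:ℝ)+1)*((i:ℝ)+2)/4 ≤ A i := by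
    intro i
    induction i with
    | zero => rw [hA0]; norm_num
    | succ i ih =>
      have h := haA i
      have haux : A (i+1) ≤ a (i+1)^2 := by
        rw [h]
        rw [le_div_iff₀ hL]
        nlinarith [hσL (i+1), hApos (i+1)]
      have hA' : A (i+1) = A i + a (i+1) := hAsucc i
      have hb : ((i:ℝ)+2)/2 ≤ a (i+1) := by
        by_contra hcon
        push_neg at hcon
        have h1 := ha (i+1)
        nlinarith [ih, haux, hA', Nat.cast_nonneg (α := ℝ) i]
      push_cast
      rw [hA']
      push_cast at ih
      nlinarith
  have growth2 : ∀ i : ℕ, 1 ≤ A i * (1 - Real.sqrt (μ/L))^i := by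
    intro i
    induction i with
    | zero => simp [hA0]
    | succ i ih =>
      have h := haA i
      have hstep : Real.sqrt (μ/L) * A (i+1) ≤ a (i+1) := by
        have h1 : (Real.sqrt (μ/L) * A (i+1))^2 ≤ a (i+1)^2 := by
          rw [h]
          rw [mul_pow, hq2, div_mul_eq_mul_div, div_le_div_iff₀ hL hL]
          nlinarith [mul_nonneg (mul_nonneg (hApos (i+1)).le hL.le)
            (by linarith : (0:ℝ) ≤ L - μ)]
        nlinarith [ha (i+1), mul_nonneg hqnn (hApos (i+1)).le]
      have h1q : (0:ℝ) ≤ 1 - Real.sqrt (μ/L) := by linarith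
      have hAstep : A i ≤ A (i+1) * (1 - Real.sqrt (μ/L)) := by
        rw [hAsucc i] at hstep ⊢
        nlinarith
      calc (1:ℝ) ≤ A i * (1 - Real.sqrt (μ/L))^i := ih
        _ ≤ (A (i+1) * (1 - Real.sqrt (μ/L))) * (1 - Real.sqrt (μ/L))^i := by
            exact mul_le_mul_of_nonneg_right hAstep (pow_nonneg h1q i)
        _ = A (i+1) * (1 - Real.sqrt (μ/L))^(i+1) := by rw [pow_succ]; ring
  -- final assembly
  have hCnn : 0 ≤ (L-μ)/2 * ‖xstar - x 0‖^2 :=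
    mul_nonneg (by linarith) (sq_nonneg _)
  have hDnn : 0 ≤ f (y k) - f xstar := sub_nonneg.mpr (hstar (y k))
  have hd1 : (0:ℝ) < ((k:ℝ)+1)*((k:ℝ)+2) := by positivity
  have hr1 : (1:ℝ) ≤ 4/(((k:ℝ)+1)*((k:ℝ)+2)) * A k := by
    rw [div_mul_eq_mul_div, le_div_iff₀ hd1]
    nlinarith [growth1 k]
  have hr2 : (1:ℝ) ≤ (1 - Real.sqrt (μ/L))^k * A k := by
    have := growth2 k
    linarith [mul_comm (A k) ((1 - Real.sqrt (μ/L))^k)]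
  have hb1 : f (y k) - f xstar ≤ 4/(((k:ℝ)+1)*((k:ℝ)+2)) * ((L-μ)/2 * ‖xstar - x 0‖^2) := by
    have hr1nn : (0:ℝ) ≤ 4/(((k:ℝ)+1)*((k:ℝ)+2)) := by positivity
    nlinarith [mul_le_mul_of_nonneg_left hfinal hr1nn,
      mul_nonneg (sub_nonneg.mpr hr1) hDnn]
  have hb2 : f (y k) - f xstar ≤ (1 - Real.sqrt (μ/L))^k * ((L-μ)/2 * ‖xstar - x 0‖^2) := by
    have h1q : (0:ℝ) ≤ 1 - Real.sqrt (μ/L) := by linarith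
    have hr2nn : (0:ℝ) ≤ (1 - Real.sqrt (μ/L))^k := pow_nonneg h1q k
    nlinarith [mul_le_mul_of_nonneg_left hfinal hr2nn,
      mul_nonneg (sub_nonneg.mpr hr2) hDnn]
  rcases min_cases (4/(((k:ℝ)+1)*((k:ℝ)+2))) ((1 - Real.sqrt (μ/L))^k) with ⟨h,_⟩|⟨h,_⟩ <;>
    rw [h] <;> assumption
end

section
/- Let f : ℝⁿ → ℝ be differentiable, L-smooth and μ-strongly convex with 0 ≤ μ < L and minimizer x*. Let {x_i}_{i=0}^k be an arbitrary sequence of points (with the query at step 0 equal to x₀), let v_i minimize m_i, and let y_i satisfy f(y_i) ≤ f(x_i) − ‖∇f(x_i)‖²/(2L) for all 0 ≤ i ≤ k. Then for k ≥ 1: A_kG_k − A_{k−1}G_{k−1} ≤ (a_k²/(2(μ₀ + μA_k)) − A_k/(2L))‖∇f(x_k)‖² + ⟨∇f(x_k), (A_{k−1} + a_k')x_k − A_{k−1}y_{k−1} − a_k'v_{k−1}⟩. -/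
open RealInnerProductSpace Finset

variable {E : Type*} [NormedAddCommGroup E] [InnerProductSpace ℝ E]

lemma aux_comb_norm (u v p : E) (t : ℝ) :
    ‖((1 - t) • v + t • u) - p‖ ^ 2
      = (1 - t) * ‖v - p‖ ^ 2 + t * ‖u - p‖ ^ 2 - t * (1 - t) * ‖u - v‖ ^ 2 := by
  have h1 : ((1 - t) • v + t • u) - p = (v - p) + t • (u - v) := by module
  have h2 : u - p = (v - p) + (u - v) := by abel
  have hs : ‖t • (u - v)‖ ^ 2 = t ^ 2 * ‖u - v‖ ^ 2 := by
    rw [norm_smul, Real.norm_eq_abs, mul_pow, sq_abs]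
  rw [h1, h2, norm_add_sq_real, norm_add_sq_real, hs, real_inner_smul_right]
  ring

lemma aux_comb_inner (g u v p : E) (t : ℝ) :
    ⟪g, ((1 - t) • v + t • u) - p⟫ = (1 - t) * ⟪g, v - p⟫ + t * ⟪g, u - p⟫ := by
  simp only [inner_sub_right, inner_add_right, real_inner_smul_right]
  ring

lemma aux_key (σ1 c μ' : ℝ) (hσ1 : 0 < σ1) (hc : 0 < c) (hμ' : 0 ≤ μ')
    (g u v x : E) :
    c * σ1 / (σ1 + c * μ') * ⟪g, v - x⟫ - c ^ 2 / (2 * (σ1 + c * μ')) * ‖g‖ ^ 2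
      ≤ σ1 / 2 * ‖u - v‖ ^ 2 + c * ⟪g, u - x⟫ + c * μ' / 2 * ‖u - x‖ ^ 2 := by
  have hσ : 0 < σ1 + c * μ' := by positivity
  have hcert : 0 ≤ ‖σ1 • (u - v) + (c * μ') • (u - x) + c • g‖ ^ 2
      + c * μ' * σ1 * ‖x - v‖ ^ 2 := by positivity
  have hdiv : 2 * (σ1 + c * μ') * (c * σ1 / (σ1 + c * μ') * ⟪g, v - x⟫
      - c ^ 2 / (2 * (σ1 + c * μ')) * ‖g‖ ^ 2)
      = 2 * c * σ1 * ⟪g, v - x⟫ - c ^ 2 * ‖g‖ ^ 2 := by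
    field_simp
  have hexp : ‖σ1 • (u - v) + (c * μ') • (u - x) + c • g‖ ^ 2
      + c * μ' * σ1 * ‖x - v‖ ^ 2
      = 2 * (σ1 + c * μ') * (σ1 / 2 * ‖u - v‖ ^ 2 + c * ⟪g, u - x⟫
          + c * μ' / 2 * ‖u - x‖ ^ 2)
        - (2 * c * σ1 * ⟪g, v - x⟫ - c ^ 2 * ‖g‖ ^ 2) := by
    simp only [← real_inner_self_eq_norm_sq]
    simp only [inner_add_left, inner_add_right, inner_sub_left, inner_sub_right,
      real_inner_smul_left, real_inner_smul_right]
    simp only [real_inner_comm u g, real_inner_comm v g, real_inner_comm x g,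
      real_inner_comm v u, real_inner_comm x u, real_inner_comm x v]
    ring
  have h2 : 2 * (σ1 + c * μ') * (c * σ1 / (σ1 + c * μ') * ⟪g, v - x⟫
      - c ^ 2 / (2 * (σ1 + c * μ')) * ‖g‖ ^ 2)
      ≤ 2 * (σ1 + c * μ') * (σ1 / 2 * ‖u - v‖ ^ 2 + c * ⟪g, u - x⟫
          + c * μ' / 2 * ‖u - x‖ ^ 2) := by
    rw [hdiv]; linarith [hcert, hexp.ge, hexp.le]
  exact (mul_le_mul_iff_right₀ (by positivity)).mp h2

/-- **Gap evolution (Lemma 2 of the paper).** For `k ≥ 1`,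
`A_k G_k - A_{k-1} G_{k-1} ≤ (a_k²/(2(μ₀ + μ A_k)) - A_k/(2L)) ‖∇f(x_k)‖²
 + ⟪∇f(x_k), (A_{k-1} + a_k') x_k - A_{k-1} y_{k-1} - a_k' v_{k-1}⟫`, with `μ₀ = L - μ`. -/
theorem gap_change {n : ℕ} (f : EuclideanSpace ℝ (Fin n) → ℝ) (L μ : ℝ)
    (hL : 0 < L) (hμ : 0 ≤ μ) (hμL : μ < L)
    (hdiff : Differentiable ℝ f)
    (hsmooth : ∀ x y : EuclideanSpace ℝ (Fin n),
      f y ≤ f x + ⟪gradient f x, y - x⟫ + L / 2 * ‖y - x‖ ^ 2)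
    (hstrong : ∀ x y : EuclideanSpace ℝ (Fin n),
      f y ≥ f x + ⟪gradient f x, y - x⟫ + μ / 2 * ‖y - x‖ ^ 2)
    (xstar : EuclideanSpace ℝ (Fin n)) (hstar : ∀ x, f xstar ≤ f x)
    (a A a' : ℕ → ℝ) (ha : ∀ i, 0 < a i)
    (hA : ∀ i, A i = ∑ j ∈ Finset.range (i + 1), a j)
    (ha' : ∀ i, a' i = a i * ((L - μ) + μ * A (i - 1)) / ((L - μ) + μ * A i))
    (x y v : ℕ → EuclideanSpace ℝ (Fin n))
    (m : ℕ → EuclideanSpace ℝ (Fin n) → ℝ)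
    (hm : ∀ i u, m i u = ∑ j ∈ Finset.range (i + 1),
        a j * (⟪gradient f (x j), u - x j⟫ + μ / 2 * ‖u - x j‖ ^ 2)
        + (L - μ) / 2 * ‖u - x 0‖ ^ 2)
    (hv : ∀ i u, m i (v i) ≤ m i u)
    (hy : ∀ i, f (y i) ≤ f (x i) - 1 / (2 * L) * ‖gradient f (x i)‖ ^ 2)
    (Lb G : ℕ → ℝ)
    (hLb : ∀ i, Lb i = (∑ j ∈ Finset.range (i + 1), a j * f (x j) + m i (v i)) / A i
        - (L - μ) / (2 * A i) * ‖x 0 - xstar‖ ^ 2)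
    (hG : ∀ i, G i = f (y i) - Lb i)
    (k : ℕ) (hk : 1 ≤ k) :
    A k * G k - A (k - 1) * G (k - 1) ≤
      (a k ^ 2 / (2 * ((L - μ) + μ * A k)) - A k / (2 * L)) * ‖gradient f (x k)‖ ^ 2
      + ⟪gradient f (x k),
          (A (k - 1) + a' k) • x k - A (k - 1) • y (k - 1) - a' k • v (k - 1)⟫ := by
  have hk1 : k - 1 + 1 = k := Nat.succ_pred_eq_of_pos hk
  have hApos : ∀ i, 0 < A i := fun i => by
    rw [hA i]; exact Finset.sum_pos (fun j _ => ha j) Finset.nonempty_range_add_one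
  have hAsum : A k = A (k - 1) + a k := by
    rw [hA k, hA (k - 1), hk1, Finset.sum_range_succ]
  have hLμ : 0 < L - μ := by linarith
  have hσ1 : 0 < (L - μ) + μ * A (k - 1) :=
    add_pos_of_pos_of_nonneg hLμ (mul_nonneg hμ (hApos _).le)
  have hσ2eq : (L - μ) + μ * A k = ((L - μ) + μ * A (k - 1)) + a k * μ := by
    rw [hAsum]; ring
  -- recurrence for m
  have hmrec : ∀ u, m k u = m (k - 1) u
      + a k * (⟪gradient f (x k), u - x k⟫ + μ / 2 * ‖u - x k‖ ^ 2) := by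
    intro u
    simp only [hm, hk1, Finset.sum_range_succ]
    ring
  -- A i * Lb i identity
  have hALb : ∀ i, A i * Lb i = (∑ j ∈ Finset.range (i + 1), a j * f (x j)) + m i (v i)
      - (L - μ) / 2 * ‖x 0 - xstar‖ ^ 2 := by
    intro i
    have hAi : A i ≠ 0 := (hApos i).ne'
    rw [hLb i]
    field_simp
  have hALbdiff : A k * Lb k - A (k - 1) * Lb (k - 1)
      = a k * f (x k) + m k (v k) - m (k - 1) (v (k - 1)) := by
    rw [hALb, hALb]
    simp only [hk1, Finset.sum_range_succ]
    ring
  -- convex-combination identity for m (k-1)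
  have hcomb : ∀ (u : EuclideanSpace ℝ (Fin n)) (t : ℝ),
      m (k - 1) ((1 - t) • v (k - 1) + t • u)
        = (1 - t) * m (k - 1) (v (k - 1)) + t * m (k - 1) u
          - ((L - μ) + μ * A (k - 1)) * (t * (1 - t) / 2) * ‖u - v (k - 1)‖ ^ 2 := by
    intro u t
    simp only [hm]
    have hsum : (∑ j ∈ Finset.range (k - 1 + 1),
        a j * (⟪gradient f (x j), ((1 - t) • v (k - 1) + t • u) - x j⟫
          + μ / 2 * ‖((1 - t) • v (k - 1) + t • u) - x j‖ ^ 2))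
        = ∑ j ∈ Finset.range (k - 1 + 1),
          ((1 - t) * (a j * (⟪gradient f (x j), v (k - 1) - x j⟫
              + μ / 2 * ‖v (k - 1) - x j‖ ^ 2))
            + t * (a j * (⟪gradient f (x j), u - x j⟫ + μ / 2 * ‖u - x j‖ ^ 2))
            - a j * (μ * (t * (1 - t) / 2) * ‖u - v (k - 1)‖ ^ 2)) := by
      refine Finset.sum_congr rfl fun j _ => ?_
      rw [aux_comb_inner, aux_comb_norm]
      ring
    rw [hsum, Finset.sum_sub_distrib, Finset.sum_add_distrib, ← Finset.mul_sum,
      ← Finset.mul_sum, ← Finset.sum_mul, ← hA, aux_comb_norm]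
    ring
  -- strong minimality of v (k-1)
  have hstrongmin : ∀ u : EuclideanSpace ℝ (Fin n),
      m (k - 1) (v (k - 1)) + ((L - μ) + μ * A (k - 1)) / 2 * ‖u - v (k - 1)‖ ^ 2
        ≤ m (k - 1) u := by
    intro u
    rcases eq_or_lt_of_le (by positivity : (0:ℝ) ≤ ‖u - v (k - 1)‖ ^ 2) with h0 | h0
    · rw [← h0]
      simpa using hv (k - 1) u
    · by_contra hcon
      push_neg at hcon
      obtain ⟨δ, hδpos, hδeq⟩ : ∃ δ, 0 < δ ∧ m (k - 1) u
          = m (k - 1) (v (k - 1))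
            + ((L - μ) + μ * A (k - 1)) / 2 * ‖u - v (k - 1)‖ ^ 2 - δ :=
        ⟨m (k - 1) (v (k - 1)) + ((L - μ) + μ * A (k - 1)) / 2 * ‖u - v (k - 1)‖ ^ 2
          - m (k - 1) u, by linarith, by ring⟩
      set t : ℝ := δ / (((L - μ) + μ * A (k - 1)) * ‖u - v (k - 1)‖ ^ 2) with htdef
      have ht0 : 0 < t := by positivity
      have hvt := hv (k - 1) ((1 - t) • v (k - 1) + t • u)
      rw [hcomb u t, hδeq] at hvt
      have h3 : t * (((L - μ) + μ * A (k - 1)) * ‖u - v (k - 1)‖ ^ 2) = δ :=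
        div_mul_cancel₀ _ (by positivity)
      have h4 : t * (t * (((L - μ) + μ * A (k - 1)) * ‖u - v (k - 1)‖ ^ 2)) = t * δ := by
        rw [h3]
      nlinarith [hvt, h4, mul_pos ht0 hδpos]
  -- the three main inequalities
  have h10 : A k * f (y k) ≤ A k * f (x k) - A k / (2 * L) * ‖gradient f (x k)‖ ^ 2 := by
    calc A k * f (y k)
        ≤ A k * (f (x k) - 1 / (2 * L) * ‖gradient f (x k)‖ ^ 2) :=
          mul_le_mul_of_nonneg_left (hy k) (hApos k).le
      _ = A k * f (x k) - A k / (2 * L) * ‖gradient f (x k)‖ ^ 2 := by ring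
  have h9 : A (k - 1) * f (x k) + A (k - 1) * ⟪gradient f (x k), y (k - 1)⟫
      - A (k - 1) * ⟪gradient f (x k), x k⟫ ≤ A (k - 1) * f (y (k - 1)) := by
    have hs := hstrong (x k) (y (k - 1))
    have hnn : 0 ≤ μ / 2 * ‖y (k - 1) - x k‖ ^ 2 := by positivity
    have h1 : f (x k) + ⟪gradient f (x k), y (k - 1) - x k⟫ ≤ f (y (k - 1)) := by
      linarith
    have h2 := mul_le_mul_of_nonneg_left h1 (hApos (k - 1)).le
    simp only [inner_sub_right] at h2
    calc A (k - 1) * f (x k) + A (k - 1) * ⟪gradient f (x k), y (k - 1)⟫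
          - A (k - 1) * ⟪gradient f (x k), x k⟫
        = A (k - 1) * (f (x k) + (⟪gradient f (x k), y (k - 1)⟫
            - ⟪gradient f (x k), x k⟫)) := by ring
      _ ≤ A (k - 1) * f (y (k - 1)) := h2
  have h8 : m (k - 1) (v (k - 1)) + a' k * ⟪gradient f (x k), v (k - 1)⟫
      - a' k * ⟪gradient f (x k), x k⟫
      - a k ^ 2 / (2 * ((L - μ) + μ * A k)) * ‖gradient f (x k)‖ ^ 2
      ≤ m k (v k) := by
    have e1 := hmrec (v k)
    have e2 := hstrongmin (v k)
    have e3 := aux_key ((L - μ) + μ * A (k - 1)) (a k) μ hσ1 (ha k) hμ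
      (gradient f (x k)) (v k) (v (k - 1)) (x k)
    have ea' : a' k = a k * ((L - μ) + μ * A (k - 1))
        / (((L - μ) + μ * A (k - 1)) + a k * μ) := by
      rw [ha' k, hσ2eq]
    rw [hσ2eq, ea']
    simp only [inner_sub_right] at e1 e3
    linarith
  -- assemble
  have hgoal_eq : A k * G k - A (k - 1) * G (k - 1)
      = A k * f (y k) - A (k - 1) * f (y (k - 1))
        - (a k * f (x k) + m k (v k) - m (k - 1) (v (k - 1))) := by
    rw [hG, hG]
    linarith [hALbdiff]
  rw [hgoal_eq]
  simp only [inner_sub_right, real_inner_smul_right]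
  have hfx : A k * f (x k) = A (k - 1) * f (x k) + a k * f (x k) := by
    rw [hAsum]; ring
  linarith [h8, h9, h10, hfx]
end

section
/- Let f : ℝⁿ → ℝ be differentiable and μ-strongly convex (μ ≥ 0) with minimizer x*. Then for every k and every choice of points x₀, …, x_k and positive weights a₀, …, a_k, the lower bound is valid: L_k ≤ f(x*), i.e., (Σ_{i=0}^k a_i f(x_i) + min_{u ∈ ℝⁿ} m_k(u))/A_k − (μ₀/(2A_k))‖x₀ − x*‖² ≤ f(x*). -/
open RealInnerProductSpace Finset

/-! Evaluating the model `m_k` at `x*` and bounding each linearisation by strong convexity,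
`a_j (⟪∇f(x_j), x* - x_j⟫ + μ/2 ‖x* - x_j‖²) ≤ a_j (f x* - f x_j)`, gives
`Σ a_j f(x_j) + min m_k ≤ Σ a_j f(x_j) + m_k(x*) ≤ A_k f(x*) + μ₀/2 ‖x₀ - x*‖²`;
dividing by `A_k > 0` is the claim. -/

theorem sum_mul_lowerModel_le {E ι : Type*} [NormedAddCommGroup E] [InnerProductSpace ℝ E]
    {f : E → ℝ} {g : E → E} {μ : ℝ}
    (hmodel : ∀ x y : E, f y ≥ f x + ⟪g x, y - x⟫ + μ / 2 * ‖y - x‖ ^ 2)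
    (s : Finset ι) {a : ι → ℝ} (ha : ∀ i ∈ s, 0 ≤ a i) (x : ι → E) (y : E) :
    ∑ i ∈ s, a i * (⟪g (x i), y - x i⟫ + μ / 2 * ‖y - x i‖ ^ 2)
      ≤ (∑ i ∈ s, a i) * f y - ∑ i ∈ s, a i * f (x i) := by
  rw [sum_mul, ← sum_sub_distrib]
  refine sum_le_sum fun i hi => ?_
  rw [← mul_sub]
  exact mul_le_mul_of_nonneg_left (by linarith [hmodel (x i) y]) (ha i hi)

theorem lower_bound_valid_general {n : ℕ} (f : EuclideanSpace ℝ (Fin n) → ℝ) (μ μ₀ : ℝ)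
    (hstrong : ∀ x y : EuclideanSpace ℝ (Fin n),
      f y ≥ f x + ⟪gradient f x, y - x⟫ + μ / 2 * ‖y - x‖ ^ 2)
    (xstar : EuclideanSpace ℝ (Fin n))
    (a A : ℕ → ℝ) (ha : ∀ i, 0 < a i)
    (hA : ∀ i, A i = ∑ j ∈ Finset.range (i + 1), a j)
    (x v : ℕ → EuclideanSpace ℝ (Fin n))
    (m : ℕ → EuclideanSpace ℝ (Fin n) → ℝ)
    (hm : ∀ i u, m i u = ∑ j ∈ Finset.range (i + 1),
        a j * (⟪gradient f (x j), u - x j⟫ + μ / 2 * ‖u - x j‖ ^ 2)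
        + μ₀ / 2 * ‖u - x 0‖ ^ 2)
    (hv : ∀ i u, m i (v i) ≤ m i u)
    (k : ℕ) :
    (∑ i ∈ Finset.range (k + 1), a i * f (x i) + m k (v k)) / A k
      - μ₀ / (2 * A k) * ‖x 0 - xstar‖ ^ 2 ≤ f xstar := by
  have hApos : 0 < A k := hA k ▸ sum_pos (fun i _ => ha i) nonempty_range_add_one
  have hmin := (hv k xstar).trans_eq (hm k xstar)
  have hmodel := sum_mul_lowerModel_le hstrong (range (k + 1)) (fun i _ => (ha i).le) x xstar
  rw [← hA] at hmodel
  rw [norm_sub_rev xstar] at hmin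
  have hscale : μ₀ / (2 * A k) * ‖x 0 - xstar‖ ^ 2 * A k = μ₀ / 2 * ‖x 0 - xstar‖ ^ 2 := by
    field_simp
  rw [sub_le_iff_le_add, div_le_iff₀ hApos, add_mul, hscale]
  linarith

/-- **Validity of the lower bound.** For a `μ`-strongly convex differentiable `f`
with minimizer `x*`, any points `x_0, …, x_k`, any positive weights, and any `μ₀ > 0`:
`(Σ a_i f(x_i) + min_u m_k(u))/A_k - (μ₀/(2 A_k)) ‖x₀ - x*‖² ≤ f x*`. -/
theorem lower_bound_valid {n : ℕ} (f : EuclideanSpace ℝ (Fin n) → ℝ) (μ μ₀ : ℝ)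
    (hμ : 0 ≤ μ) (hμ₀ : 0 < μ₀)
    (hdiff : Differentiable ℝ f)
    (hstrong : ∀ x y : EuclideanSpace ℝ (Fin n),
      f y ≥ f x + ⟪gradient f x, y - x⟫ + μ / 2 * ‖y - x‖ ^ 2)
    (xstar : EuclideanSpace ℝ (Fin n)) (hstar : ∀ x, f xstar ≤ f x)
    (a A : ℕ → ℝ) (ha : ∀ i, 0 < a i)
    (hA : ∀ i, A i = ∑ j ∈ Finset.range (i + 1), a j)
    (x v : ℕ → EuclideanSpace ℝ (Fin n))
    (m : ℕ → EuclideanSpace ℝ (Fin n) → ℝ)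
    (hm : ∀ i u, m i u = ∑ j ∈ Finset.range (i + 1),
        a j * (⟪gradient f (x j), u - x j⟫ + μ / 2 * ‖u - x j‖ ^ 2)
        + μ₀ / 2 * ‖u - x 0‖ ^ 2)
    (hv : ∀ i u, m i (v i) ≤ m i u)
    (k : ℕ) :
    (∑ i ∈ Finset.range (k + 1), a i * f (x i) + m k (v k)) / A k
      - μ₀ / (2 * A k) * ‖x 0 - xstar‖ ^ 2 ≤ f xstar :=
  lower_bound_valid_general f μ μ₀ hstrong xstar a A ha hA x v m hm hv k
end

section
/- For k ≥ 1, the change in the lower bound satisfies A_kL_k − A_{k−1}L_{k−1} ≥ a_kf(x_k) − (a_k²/(2(μ₀ + μA_k)))‖∇f(x_k)‖² + a_k'⟨∇f(x_k), v_{k−1} − x_k⟩. -/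
/-!
Multiplying out, `A_k L_k - A_{k-1} L_{k-1} = a_k f(x_k) + m_k(v_k) - m_{k-1}(v_{k-1})`, and
`m_k = m_{k-1} + a_k (⟪∇f(x_k), · - x_k⟫ + μ/2 ‖· - x_k‖²)`. Each `m_i` is a quadratic with Hessian
`(μ₀ + μ A_i) • id`, so at its minimizer `v_i` it is exactly `m_i(v_i) + (μ₀ + μ A_i)/2 ‖· - v_i‖²`.
Hence the increment is at least the minimum over `u` of
`(μ₀ + μ A_{k-1})/2 ‖u - v_{k-1}‖² + a_k (⟪∇f(x_k), u - x_k⟫ + μ/2 ‖u - x_k‖²)`,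
which is computed by completing the square.
-/

open RealInnerProductSpace Finset

variable {E : Type*} [NormedAddCommGroup E] [InnerProductSpace ℝ E]

def IsIsotropicQuadratic (σ : ℝ) (φ : E → ℝ) : Prop :=
  ∃ (b : E) (c : ℝ), ∀ u, φ u = σ / 2 * ‖u‖ ^ 2 + ⟪b, u⟫ + c

namespace IsIsotropicQuadratic

variable {σ τ : ℝ} {φ ψ : E → ℝ}

lemma inner_sub (g p : E) : IsIsotropicQuadratic 0 (fun u => ⟪g, u - p⟫) :=
  ⟨g, -⟪g, p⟫, fun u => by dsimp only; rw [inner_sub_right]; ring⟩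

lemma sq_norm_sub (σ : ℝ) (p : E) : IsIsotropicQuadratic σ (fun u => σ / 2 * ‖u - p‖ ^ 2) :=
  ⟨-σ • p, σ / 2 * ‖p‖ ^ 2, fun u => by
    dsimp only
    rw [norm_sub_sq_real, real_inner_smul_left, real_inner_comm p]; ring⟩

lemma add (hφ : IsIsotropicQuadratic σ φ) (hψ : IsIsotropicQuadratic τ ψ) :
    IsIsotropicQuadratic (σ + τ) (fun u => φ u + ψ u) := by
  obtain ⟨b, c, h⟩ := hφ
  obtain ⟨b', c', h'⟩ := hψ
  exact ⟨b + b', c + c', fun u => by dsimp only; rw [h, h', inner_add_left]; ring⟩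

lemma const_mul (a : ℝ) (hφ : IsIsotropicQuadratic σ φ) :
    IsIsotropicQuadratic (a * σ) (fun u => a * φ u) := by
  obtain ⟨b, c, h⟩ := hφ
  exact ⟨a • b, a * c, fun u => by dsimp only; rw [h, real_inner_smul_left]; ring⟩

lemma sum {ι : Type*} (s : Finset ι) {σ : ι → ℝ} {φ : ι → E → ℝ}
    (h : ∀ i ∈ s, IsIsotropicQuadratic (σ i) (φ i)) :
    IsIsotropicQuadratic (∑ i ∈ s, σ i) (fun u => ∑ i ∈ s, φ i u) := by
  classical
  induction s using Finset.induction_on with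
  | empty => exact ⟨0, 0, by simp⟩
  | insert i s hi ih =>
    simp only [sum_insert hi]
    exact (h i (mem_insert_self i s)).add (ih fun j hj => h j (mem_insert_of_mem hj))

lemma apply_eq_of_forall_le (hφ : IsIsotropicQuadratic σ φ) (hσ : 0 < σ) {v : E}
    (hv : ∀ u, φ v ≤ φ u) (u : E) : φ u = φ v + σ / 2 * ‖u - v‖ ^ 2 := by
  obtain ⟨b, c, h⟩ := hφ
  have hw : ∀ u, φ u = φ (-σ⁻¹ • b) + σ / 2 * ‖u - -σ⁻¹ • b‖ ^ 2 := fun u => by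
    rw [h, h, norm_sub_sq_real, norm_smul, real_inner_smul_right, real_inner_smul_right,
      real_inner_self_eq_norm_sq, real_inner_comm]
    simp only [norm_neg, Real.norm_eq_abs, abs_inv, abs_of_pos hσ]
    field_simp
    ring
  have hvw : v = -σ⁻¹ • b := by
    have := hw v ▸ hv (-σ⁻¹ • b)
    have hsq : ‖v - -σ⁻¹ • b‖ ^ 2 ≤ 0 := by nlinarith
    rw [← sub_eq_zero, ← norm_eq_zero]
    exact pow_eq_zero_iff two_ne_zero |>.mp (le_antisymm hsq (sq_nonneg _))
  rw [hvw]
  exact hw u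

end IsIsotropicQuadratic

lemma isIsotropicQuadratic_proximal_model (a : ℕ → ℝ) (g x : ℕ → E) (μ μ₀ : ℝ) (x₀ : E)
    (N : ℕ) :
    IsIsotropicQuadratic (μ₀ + μ * ∑ j ∈ range N, a j) (fun u =>
      ∑ j ∈ range N, a j * (⟪g j, u - x j⟫ + μ / 2 * ‖u - x j‖ ^ 2) + μ₀ / 2 * ‖u - x₀‖ ^ 2) := by
  have := (IsIsotropicQuadratic.sum (range N) fun j _ =>
    ((IsIsotropicQuadratic.inner_sub (g j) (x j)).add
      (IsIsotropicQuadratic.sq_norm_sub μ (x j))).const_mul (a j)).add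
    (IsIsotropicQuadratic.sq_norm_sub μ₀ x₀)
  convert this using 1
  simp only [zero_add, mul_sum]
  rw [add_comm]
  simp only [mul_comm]

-- Completing the square: up to `a μ σ' / (2σ) ‖p - q‖² ≥ 0`, the left side is the minimum over `u`
-- of the right side.
lemma le_prox_add_quadratic_model (g p q u : E) {σ' a μ σ : ℝ} (hσ' : 0 ≤ σ') (ha : 0 ≤ a)
    (hμ : 0 ≤ μ) (hσ : σ' + a * μ = σ) (hσpos : 0 < σ) :
    -(a ^ 2 / (2 * σ)) * ‖g‖ ^ 2 + a * σ' / σ * ⟪g, p - q⟫ ≤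
      σ' / 2 * ‖u - p‖ ^ 2 + a * (⟪g, u - q⟫ + μ / 2 * ‖u - q‖ ^ 2) := by
  have key : σ' / 2 * ‖u - p‖ ^ 2 + a * (⟪g, u - q⟫ + μ / 2 * ‖u - q‖ ^ 2)
      - (-(a ^ 2 / (2 * σ)) * ‖g‖ ^ 2 + a * σ' / σ * ⟪g, p - q⟫)
      = σ / 2 * ‖(u - q) - σ⁻¹ • (σ' • (p - q) - a • g)‖ ^ 2
        + a * μ * σ' / (2 * σ) * ‖p - q‖ ^ 2 := by
    have hup : u - p = (u - q) - (p - q) := by abel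
    rw [hup]
    generalize u - q = y, p - q = d
    subst hσ
    simp only [← real_inner_self_eq_norm_sq, inner_sub_left, inner_sub_right, real_inner_smul_left,
      real_inner_smul_right, real_inner_comm y d, real_inner_comm g d, real_inner_comm g y]
    field_simp
    ring
  have hrem : 0 ≤ a * μ * σ' / (2 * σ) * ‖p - q‖ ^ 2 := by positivity
  nlinarith [sq_nonneg ‖(u - q) - σ⁻¹ • (σ' • (p - q) - a • g)‖]

theorem lower_bound_change_general {n : ℕ} (f : EuclideanSpace ℝ (Fin n) → ℝ) (L μ : ℝ)
    (hμ : 0 ≤ μ) (hμL : μ < L)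
    (xstar : EuclideanSpace ℝ (Fin n))
    (a A a' : ℕ → ℝ) (ha : ∀ i, 0 < a i)
    (hA : ∀ i, A i = ∑ j ∈ Finset.range (i + 1), a j)
    (ha' : ∀ i, a' i = a i * ((L - μ) + μ * A (i - 1)) / ((L - μ) + μ * A i))
    (x v : ℕ → EuclideanSpace ℝ (Fin n))
    (m : ℕ → EuclideanSpace ℝ (Fin n) → ℝ)
    (hm : ∀ i u, m i u = ∑ j ∈ Finset.range (i + 1),
        a j * (⟪gradient f (x j), u - x j⟫ + μ / 2 * ‖u - x j‖ ^ 2)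
        + (L - μ) / 2 * ‖u - x 0‖ ^ 2)
    (hv : ∀ i u, m i (v i) ≤ m i u)
    (Lb : ℕ → ℝ)
    (hLb : ∀ i, Lb i = (∑ j ∈ Finset.range (i + 1), a j * f (x j) + m i (v i)) / A i
        - (L - μ) / (2 * A i) * ‖x 0 - xstar‖ ^ 2)
    (k : ℕ) (hk : 1 ≤ k) :
    A k * Lb k - A (k - 1) * Lb (k - 1) ≥
      a k * f (x k) - a k ^ 2 / (2 * ((L - μ) + μ * A k)) * ‖gradient f (x k)‖ ^ 2
      + a' k * ⟪gradient f (x k), v (k - 1) - x k⟫ := by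
  have hk1 : k - 1 + 1 = k := Nat.sub_add_cancel hk
  have hA_pos (i : ℕ) : 0 < A i := hA i ▸ sum_pos (fun j _ => ha j) nonempty_range_add_one
  have hσ_pos (i : ℕ) : 0 < L - μ + μ * A i := by nlinarith [hA_pos i]
  have hA_succ : A k = A (k - 1) + a k := by rw [hA, hA, hk1, sum_range_succ]
  have hALb (i : ℕ) : A i * Lb i = ∑ j ∈ range (i + 1), a j * f (x j) + m i (v i)
      - (L - μ) / 2 * ‖x 0 - xstar‖ ^ 2 := by
    rw [hLb]
    field_simp [(hA_pos i).ne']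
  have hm_succ : m k (v k) = m (k - 1) (v k)
      + a k * (⟪gradient f (x k), v k - x k⟫ + μ / 2 * ‖v k - x k‖ ^ 2) := by
    rw [hm, hm, hk1, sum_range_succ]
    ring
  have hm_quad : IsIsotropicQuadratic (L - μ + μ * A (k - 1)) (m (k - 1)) := by
    rw [hA, funext (hm (k - 1))]
    exact isIsotropicQuadratic_proximal_model _ _ _ _ _ _ _
  have hm_min := hm_quad.apply_eq_of_forall_le (hσ_pos _) (hv (k - 1)) (v k)
  have hstep := le_prox_add_quadratic_model (gradient f (x k)) (v (k - 1)) (x k) (v k)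
    (hσ_pos (k - 1)).le (ha k).le hμ (by rw [hA_succ]; ring) (hσ_pos k)
  rw [hALb, hALb, ha', hk1, sum_range_succ]
  linarith

/-- **Change in the lower bound.** For `k ≥ 1`,
`A_k L_k - A_{k-1} L_{k-1} ≥ a_k f(x_k) - (a_k²/(2(μ₀ + μ A_k))) ‖∇f(x_k)‖²
 + a_k' ⟪∇f(x_k), v_{k-1} - x_k⟫`, with `μ₀ = L - μ`. -/
theorem lower_bound_change {n : ℕ} (f : EuclideanSpace ℝ (Fin n) → ℝ) (L μ : ℝ)
    (hL : 0 < L) (hμ : 0 ≤ μ) (hμL : μ < L)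
    (hdiff : Differentiable ℝ f)
    (xstar : EuclideanSpace ℝ (Fin n)) (hstar : ∀ x, f xstar ≤ f x)
    (a A a' : ℕ → ℝ) (ha : ∀ i, 0 < a i)
    (hA : ∀ i, A i = ∑ j ∈ Finset.range (i + 1), a j)
    (ha' : ∀ i, a' i = a i * ((L - μ) + μ * A (i - 1)) / ((L - μ) + μ * A i))
    (x v : ℕ → EuclideanSpace ℝ (Fin n))
    (m : ℕ → EuclideanSpace ℝ (Fin n) → ℝ)
    (hm : ∀ i u, m i u = ∑ j ∈ Finset.range (i + 1),
        a j * (⟪gradient f (x j), u - x j⟫ + μ / 2 * ‖u - x j‖ ^ 2)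
        + (L - μ) / 2 * ‖u - x 0‖ ^ 2)
    (hv : ∀ i u, m i (v i) ≤ m i u)
    (Lb : ℕ → ℝ)
    (hLb : ∀ i, Lb i = (∑ j ∈ Finset.range (i + 1), a j * f (x j) + m i (v i)) / A i
        - (L - μ) / (2 * A i) * ‖x 0 - xstar‖ ^ 2)
    (k : ℕ) (hk : 1 ≤ k) :
    A k * Lb k - A (k - 1) * Lb (k - 1) ≥
      a k * f (x k) - a k ^ 2 / (2 * ((L - μ) + μ * A k)) * ‖gradient f (x k)‖ ^ 2
      + a' k * ⟪gradient f (x k), v (k - 1) - x k⟫ :=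
  lower_bound_change_general f L μ hμ hμL xstar a A a' ha hA ha' x v m hm hv Lb hLb k hk
end

section
/- Let f : ℝⁿ → ℝ be differentiable and convex, and suppose f(y_i) ≤ f(x_i) − ‖∇f(x_i)‖²/(2L) for all i. Then for k ≥ 1 the change in the upper bound U_i = f(y_i) satisfies A_kU_k − A_{k−1}U_{k−1} ≤ −(A_k/(2L))‖∇f(x_k)‖² + A_{k−1}⟨∇f(x_k), x_k − y_{k−1}⟩ + a_kf(x_k). -/
open RealInnerProductSpace Finset

/-! Multiply the descent inequality at `x_k` by `A_k` and the convexity inequality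
`f(y_{k-1}) ≥ f(x_k) + ⟪∇f(x_k), y_{k-1} - x_k⟫` by `A_{k-1}`, and subtract; the two weights
are nonnegative and differ by `a_k`. -/

theorem mul_sub_mul_le_of_descent_of_support {E : Type*} [NormedAddCommGroup E]
    [InnerProductSpace ℝ E] {f : E → ℝ} {g x y z : E} {α β δ : ℝ} (hα : 0 ≤ α) (hβ : 0 ≤ β)
    (hdesc : f y ≤ f x - δ) (hsupp : f x + ⟪g, z - x⟫ ≤ f z) :
    β * f y - α * f z ≤ -(β * δ) + α * ⟪g, x - z⟫ + (β - α) * f x := by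
  have hflip : ⟪g, x - z⟫ = -⟪g, z - x⟫ := by rw [← inner_neg_right, neg_sub]
  rw [hflip]
  nlinarith [mul_le_mul_of_nonneg_left hdesc hβ, mul_le_mul_of_nonneg_left hsupp hα]

theorem upper_bound_change_general {n : ℕ} (f : EuclideanSpace ℝ (Fin n) → ℝ) (L : ℝ)
    (hconv : ∀ x y : EuclideanSpace ℝ (Fin n),
      f y ≥ f x + ⟪gradient f x, y - x⟫)
    (a A : ℕ → ℝ) (ha : ∀ i, 0 < a i)
    (hA : ∀ i, A i = ∑ j ∈ Finset.range (i + 1), a j)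
    (x y : ℕ → EuclideanSpace ℝ (Fin n))
    (hy : ∀ i, f (y i) ≤ f (x i) - 1 / (2 * L) * ‖gradient f (x i)‖ ^ 2)
    (k : ℕ) (hk : 1 ≤ k) :
    A k * f (y k) - A (k - 1) * f (y (k - 1)) ≤
      -(A k / (2 * L)) * ‖gradient f (x k)‖ ^ 2
      + A (k - 1) * ⟪gradient f (x k), x k - y (k - 1)⟫ + a k * f (x k) := by
  have hA_nonneg : ∀ i, 0 ≤ A i := fun i => by
    rw [hA]
    exact sum_nonneg fun j _ => (ha j).le
  have hA_step : A k - A (k - 1) = a k := by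
    rw [hA, hA, Nat.sub_add_cancel hk, sum_range_succ, add_sub_cancel_left]
  have key := mul_sub_mul_le_of_descent_of_support (hA_nonneg (k - 1)) (hA_nonneg k) (hy k)
    (hconv (x k) (y (k - 1))).le
  rw [hA_step] at key
  convert key using 3
  ring

/-- **Change in the upper bound.** If `f` is convex and differentiable and
`f (y i) ≤ f (x i) - ‖∇f(x i)‖²/(2L)` for all `i`, then for `k ≥ 1`, with `U_i = f (y i)`,
`A_k U_k - A_{k-1} U_{k-1} ≤ -(A_k/(2L)) ‖∇f(x_k)‖²
 + A_{k-1} ⟪∇f(x_k), x_k - y_{k-1}⟫ + a_k f(x_k)`. -/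
theorem upper_bound_change {n : ℕ} (f : EuclideanSpace ℝ (Fin n) → ℝ) (L : ℝ)
    (hL : 0 < L)
    (hdiff : Differentiable ℝ f)
    (hconv : ∀ x y : EuclideanSpace ℝ (Fin n),
      f y ≥ f x + ⟪gradient f x, y - x⟫)
    (a A : ℕ → ℝ) (ha : ∀ i, 0 < a i)
    (hA : ∀ i, A i = ∑ j ∈ Finset.range (i + 1), a j)
    (x y : ℕ → EuclideanSpace ℝ (Fin n))
    (hy : ∀ i, f (y i) ≤ f (x i) - 1 / (2 * L) * ‖gradient f (x i)‖ ^ 2)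
    (k : ℕ) (hk : 1 ≤ k) :
    A k * f (y k) - A (k - 1) * f (y (k - 1)) ≤
      -(A k / (2 * L)) * ‖gradient f (x k)‖ ^ 2
      + A (k - 1) * ⟪gradient f (x k), x k - y (k - 1)⟫ + a k * f (x k) :=
  upper_bound_change_general f L hconv a A ha hA x y hy k hk
end

section
/- Let a₀, a₁, … be positive reals with partial sums A_i = Σ_{j=0}^i a_j, and suppose a₀ = 1 and a_k² = A_k for all k ≥ 1. Then A_k ≥ (k+1)(k+2)/4 for all k ≥ 0. -/
open Finset

/-!
Since `A (k+1) = A k + a (k+1)`, the weight `x = a (k+1)` solves `x * (x - 1) = A k`.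
If `A k ≥ (k+1)(k+2)/4 ≥ t * (t - 1)` for `t = (k+2)/2`, monotonicity of `x ↦ x * (x - 1)`
on `[1/2, ∞)` gives `a (k+1) ≥ (k+2)/2`, and then
`A (k+1) ≥ (k+1)(k+2)/4 + (k+2)/2 = (k+2)(k+3)/4`.
-/

lemma le_of_mul_sub_one_le_mul_sub_one {t x : ℝ} (ht : 1 ≤ t) (hx : 0 < x)
    (h : t * (t - 1) ≤ x * (x - 1)) : t ≤ x := by
  have hx1 : 1 ≤ x := by nlinarith
  nlinarith

lemma half_succ_le_of_sq_eq_add {k : ℕ} {S x : ℝ} (hx : 0 < x) (hsq : x ^ 2 = S + x)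
    (hS : ((k : ℝ) + 1) * ((k : ℝ) + 2) / 4 ≤ S) : ((k : ℝ) + 2) / 2 ≤ x := by
  refine le_of_mul_sub_one_le_mul_sub_one (by linarith [k.cast_nonneg (α := ℝ)]) hx ?_
  nlinarith [k.cast_nonneg (α := ℝ)]

/-- **Growth of the weight sequence, smooth convex case (`μ = 0`).**
If `a 0 = 1` and `a k ^ 2 = A k` for all `k ≥ 1`, where `A` is the sequence of partial
sums of the positive sequence `a`, then `A k ≥ (k+1)(k+2)/4` for all `k`. -/
theorem weight_growth_convex (a A : ℕ → ℝ) (ha : ∀ i, 0 < a i)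
    (hA : ∀ i, A i = ∑ j ∈ Finset.range (i + 1), a j)
    (ha0 : a 0 = 1) (hak : ∀ k, 1 ≤ k → a k ^ 2 = A k) :
    ∀ k, A k ≥ ((k : ℝ) + 1) * ((k : ℝ) + 2) / 4 := by
  intro k
  induction k with
  | zero => norm_num [hA 0, ha0]
  | succ n ih =>
    have hstep : A (n + 1) = A n + a (n + 1) := by
      rw [hA, hA, sum_range_succ _ (n + 1)]
    have hweight : ((n : ℝ) + 2) / 2 ≤ a (n + 1) :=
      half_succ_le_of_sq_eq_add (ha _) (hstep ▸ hak _ n.succ_pos) ih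
    push_cast
    linarith
end

section
/- Let 0 < μ < L and μ₀ = L − μ. Let a₀, a₁, … be positive reals with partial sums A_i = Σ_{j=0}^i a_j, and suppose a₀ = 1 and a_k²/(A_k(μ₀ + μA_k)) = 1/L for all k ≥ 1. Then A_k ≥ (1 − √(μ/L))^{−k} for all k ≥ 0. -/
open Finset

/-!
Since `μ₀ ≥ 0`, the defining relation gives `L a_k² = A_k (μ₀ + μ A_k) ≥ μ A_k²`, i.e.
`a_k ≥ √(μ/L) A_k`. Hence `A_{k-1} = A_k - a_k ≤ (1 - √(μ/L)) A_k`, and iterating from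
`A_0 = a_0 = 1` gives the geometric lower bound.
-/

theorem sqrt_div_mul_le_of_sq_div_eq {L μ a A : ℝ} (hμ : 0 ≤ μ) (hμL : μ < L) (ha : 0 ≤ a)
    (hA : 0 < A) (h : a ^ 2 / (A * ((L - μ) + μ * A)) = 1 / L) :
    Real.sqrt (μ / L) * A ≤ a := by
  have hL : 0 < L := hμ.trans_lt hμL
  have hden : 0 < A * ((L - μ) + μ * A) := by
    have : 0 ≤ μ * A := mul_nonneg hμ hA.le
    exact mul_pos hA (by linarith)
  have hsq : a ^ 2 * L = A * ((L - μ) + μ * A) := by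
    rw [div_eq_div_iff hden.ne' hL.ne'] at h
    linarith
  have hle : μ / L * A ^ 2 ≤ a ^ 2 := by
    rw [div_mul_eq_mul_div, div_le_iff₀ hL, hsq]
    nlinarith
  calc Real.sqrt (μ / L) * A = Real.sqrt (μ / L * A ^ 2) := by
        rw [Real.sqrt_mul (div_nonneg hμ hL.le), Real.sqrt_sq hA.le]
    _ ≤ Real.sqrt (a ^ 2) := Real.sqrt_le_sqrt hle
    _ = a := Real.sqrt_sq ha

theorem le_pow_mul_of_le_mul_succ {A : ℕ → ℝ} {r : ℝ} (hr : 0 ≤ r)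
    (h : ∀ k, A k ≤ r * A (k + 1)) (k : ℕ) : A 0 ≤ r ^ k * A k := by
  induction k with
  | zero => simp
  | succ k ih =>
    calc A 0 ≤ r ^ k * A k := ih
      _ ≤ r ^ k * (r * A (k + 1)) := mul_le_mul_of_nonneg_left (h k) (pow_nonneg hr k)
      _ = r ^ (k + 1) * A (k + 1) := by ring

/-- **Growth of the weight sequence, strongly convex case.** Let `0 < μ < L` and
`μ₀ = L - μ`. If `a 0 = 1` and `a k ^ 2 / (A k * (μ₀ + μ * A k)) = 1 / L` for all
`k ≥ 1`, where `A` is the sequence of partial sums of the positive sequence `a`,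
then `A k ≥ (1 - √(μ/L))⁻ᵏ` for all `k`. -/
theorem weight_growth_strongly_convex (L μ : ℝ) (hμ : 0 < μ) (hμL : μ < L)
    (a A : ℕ → ℝ) (ha : ∀ i, 0 < a i)
    (hA : ∀ i, A i = ∑ j ∈ Finset.range (i + 1), a j)
    (ha0 : a 0 = 1)
    (hak : ∀ k, 1 ≤ k → a k ^ 2 / (A k * ((L - μ) + μ * A k)) = 1 / L) :
    ∀ k : ℕ, A k ≥ (1 - Real.sqrt (μ / L)) ^ (-(k : ℤ)) := by
  set q := Real.sqrt (μ / L)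
  have hq : q < 1 := by
    rw [Real.sqrt_lt' one_pos, one_pow, div_lt_one (hμ.trans hμL)]
    exact hμL
  have hApos : ∀ i, 0 < A i := fun i => by
    rw [hA i]
    exact Finset.sum_pos (fun j _ => ha j) ⟨0, by simp⟩
  have hstep : ∀ k, A k ≤ (1 - q) * A (k + 1) := fun k => by
    have hqa := sqrt_div_mul_le_of_sq_div_eq hμ.le hμL (ha (k + 1)).le (hApos (k + 1))
      (hak (k + 1) k.succ_pos)
    have hsucc : A (k + 1) = A k + a (k + 1) := by rw [hA, hA, Finset.sum_range_succ]
    linarith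
  intro k
  have hgrowth := le_pow_mul_of_le_mul_succ (sub_nonneg.2 hq.le) hstep k
  rw [hA 0, Finset.sum_range_one, ha0] at hgrowth
  rw [ge_iff_le, zpow_neg, zpow_natCast, inv_le_iff_one_le_mul₀' (pow_pos (sub_pos.2 hq) k)]
  exact hgrowth
end

section
/- Let f : ℝⁿ → ℝ be differentiable, L-smooth and μ-strongly convex with 0 ≤ μ < L and minimizer x*. Suppose a₀ = 1 and a_k²/(A_k(μ₀ + μA_k)) = 1/L for all k ≥ 1, and define the Nesterov iteration: the query at step 0 is x₀, y_i = x_i − (1/L)∇f(x_i) for all i ≥ 0, and x_i = (A_{i−1}/(a_i' + A_{i−1}))y_{i−1} + (a_i'/(a_i' + A_{i−1}))v_{i−1} for i ≥ 1. Then f(y_k) − f(x*) ≤ min{4/((k+1)(k+2)), (1 − √(μ/L))^k} · ((L − μ)/2)‖x* − x₀‖². -/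
open RealInnerProductSpace Finset

set_option maxHeartbeats 1000000 in
/-- **Convergence of Nesterov's accelerated method.** With `μ₀ = L - μ`, weights
satisfying `a 0 = 1`, `a k ^ 2 / (A k * (μ₀ + μ A k)) = 1 / L` for `k ≥ 1`,
`v_i = (μ₀ x₀ + μ Σ a_j x_j - Σ a_j ∇f(x_j))/(μ₀ + μ A_i)`,
`y_i = x_i - (1/L) ∇f(x_i)`, and
`x_i = (A_{i-1}/(a_i' + A_{i-1})) y_{i-1} + (a_i'/(a_i' + A_{i-1})) v_{i-1}` for `i ≥ 1`,
one has `f (y k) - f x* ≤ min (4/((k+1)(k+2))) ((1 - √(μ/L))^k) ((L-μ)/2) ‖x* - x₀‖²`. -/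
theorem nesterov_convergence {n : ℕ} (f : EuclideanSpace ℝ (Fin n) → ℝ) (L μ : ℝ)
    (hL : 0 < L) (hμ : 0 ≤ μ) (hμL : μ < L)
    (hdiff : Differentiable ℝ f)
    (hsmooth : ∀ x y : EuclideanSpace ℝ (Fin n),
      f y ≤ f x + ⟪gradient f x, y - x⟫ + L / 2 * ‖y - x‖ ^ 2)
    (hstrong : ∀ x y : EuclideanSpace ℝ (Fin n),
      f y ≥ f x + ⟪gradient f x, y - x⟫ + μ / 2 * ‖y - x‖ ^ 2)
    (xstar : EuclideanSpace ℝ (Fin n)) (hstar : ∀ x, f xstar ≤ f x)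
    (a A a' : ℕ → ℝ) (ha : ∀ i, 0 < a i)
    (hA : ∀ i, A i = ∑ j ∈ Finset.range (i + 1), a j)
    (ha' : ∀ i, a' i = a i * ((L - μ) + μ * A (i - 1)) / ((L - μ) + μ * A i))
    (ha0 : a 0 = 1)
    (hak : ∀ k, 1 ≤ k → a k ^ 2 / (A k * ((L - μ) + μ * A k)) = 1 / L)
    (x y v : ℕ → EuclideanSpace ℝ (Fin n))
    (hv : ∀ i, v i = ((L - μ) + μ * A i)⁻¹ •
        ((L - μ) • x 0 + μ • ∑ j ∈ Finset.range (i + 1), a j • x j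
          - ∑ j ∈ Finset.range (i + 1), a j • gradient f (x j)))
    (hy : ∀ i, y i = x i - (1 / L) • gradient f (x i))
    (hx : ∀ i, 1 ≤ i → x i = (A (i - 1) / (a' i + A (i - 1))) • y (i - 1)
        + (a' i / (a' i + A (i - 1))) • v (i - 1))
    (k : ℕ) :
    f (y k) - f xstar ≤
      min (4 / (((k : ℝ) + 1) * ((k : ℝ) + 2))) ((1 - Real.sqrt (μ / L)) ^ k)
        * ((L - μ) / 2 * ‖xstar - x 0‖ ^ 2) := by
  have hLne : L ≠ 0 := ne_of_gt hL
  obtain ⟨B, hBdef⟩ : ∃ B : ℕ → ℝ, ∀ i, B i = (L - μ) + μ * A i := ⟨_, fun i => rfl⟩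
  obtain ⟨E, hEdef⟩ : ∃ E : ℕ → ℝ, ∀ i,
      E i = A i * (f (y i) - f xstar) + B i / 2 * ‖v i - xstar‖ ^ 2 := ⟨_, fun i => rfl⟩
  have hApos : ∀ i, 0 < A i := by
    intro i; rw [hA i]
    exact Finset.sum_pos (fun j _ => ha j) ⟨0, Finset.mem_range.2 (Nat.succ_pos i)⟩
  have hA1 : ∀ i, 1 ≤ A i := by
    intro i; rw [hA i, ← ha0]
    exact Finset.single_le_sum (f := a) (fun j _ => (ha j).le) (Finset.mem_range.2 (Nat.succ_pos i))
  have hBpos : ∀ i, 0 < B i := by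
    intro i; rw [hBdef i]
    have := hApos i; nlinarith
  have hBL : ∀ i, L ≤ B i := by
    intro i; rw [hBdef i]; have := hA1 i; nlinarith
  have hA0 : A 0 = 1 := by rw [hA]; simp [ha0]
  have hB0 : B 0 = L := by rw [hBdef, hA0]; ring
  have hAsucc : ∀ i, A (i + 1) = A i + a (i + 1) := by
    intro i; rw [hA, hA, Finset.sum_range_succ]
  have hBsucc : ∀ i, B (i + 1) = B i + a (i + 1) * μ := by
    intro i; rw [hBdef, hBdef, hAsucc]; ring
  have haA : ∀ i, a (i + 1) ^ 2 * L = A (i + 1) * B (i + 1) := by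
    intro i
    have h := hak (i + 1) (Nat.le_add_left 1 i)
    rw [← hBdef (i + 1)] at h
    rw [div_eq_div_iff (mul_pos (hApos _) (hBpos _)).ne' hLne] at h
    linarith
  have hvB : ∀ i, B i • v i = (L - μ) • x 0 + μ • ∑ j ∈ Finset.range (i + 1), a j • x j
      - ∑ j ∈ Finset.range (i + 1), a j • gradient f (x j) := by
    intro i
    have hne : ((L - μ) + μ * A i) ≠ 0 := by rw [← hBdef i]; exact (hBpos i).ne'
    rw [hv i, smul_smul, hBdef i, mul_inv_cancel₀ hne, one_smul]
  have hvrec : ∀ i, B (i + 1) • v (i + 1)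
      = B i • v i + (a (i + 1) * μ) • x (i + 1) - a (i + 1) • gradient f (x (i + 1)) := by
    intro i
    rw [hvB, hvB, Finset.sum_range_succ (fun j => a j • x j) (i + 1),
      Finset.sum_range_succ (fun j => a j • gradient f (x j)) (i + 1)]
    module
  -- smoothness step: descent lemma
  have hS : ∀ i, f (y i) ≤ f (x i) - ‖gradient f (x i)‖ ^ 2 / (2 * L) := by
    intro i
    have h := hsmooth (x i) (y i)
    have he : y i - x i = -((1 / L) • gradient f (x i)) := by rw [hy i]; module
    rw [he, inner_neg_right, real_inner_smul_right, norm_neg, norm_smul, Real.norm_eq_abs,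
      abs_of_pos (by positivity : (0:ℝ) < 1 / L), real_inner_self_eq_norm_sq] at h
    have h2 : L / 2 * (1 / L * ‖gradient f (x i)‖) ^ 2 = ‖gradient f (x i)‖ ^ 2 / (2 * L) := by
      field_simp
    have h3 : (1 : ℝ) / L * ‖gradient f (x i)‖ ^ 2 = ‖gradient f (x i)‖ ^ 2 / L := by ring
    rw [h2] at h
    have hgl : ‖gradient f (x i)‖ ^ 2 / L = 2 * (‖gradient f (x i)‖ ^ 2 / (2 * L)) := by
      field_simp
    nlinarith [h]
  -- step decrease
  have hstep : ∀ k, E (k + 1) ≤ E k := by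
    intro k
    set g : EuclideanSpace ℝ (Fin n) := gradient f (x (k + 1)) with hg
    set u : EuclideanSpace ℝ (Fin n) := v k - xstar with hu
    set w : EuclideanSpace ℝ (Fin n) := x (k + 1) - xstar with hw
    have hap : 0 < a (k + 1) := ha _
    have hBk := hBpos k
    have hBk1 := hBpos (k + 1)
    have hAk := hApos k
    have hAk1 := hApos (k + 1)
    have ha'e : a' (k + 1) = a (k + 1) * B k / B (k + 1) := by
      rw [ha' (k + 1)]
      simp only [Nat.add_sub_cancel]
      rw [hBdef k, hBdef (k + 1)]
    have ha'p : 0 < a' (k + 1) := by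
      rw [ha'e]; exact div_pos (mul_pos hap hBk) hBk1
    -- x (k+1) combination
    have hxs : (a' (k + 1) + A k) • x (k + 1) = A k • y k + a' (k + 1) • v k := by
      have hd : a' (k + 1) + A k ≠ 0 := by positivity
      rw [hx (k + 1) (Nat.le_add_left 1 k)]
      simp only [Nat.add_sub_cancel]
      rw [smul_add, smul_smul, smul_smul, mul_comm (a' (k + 1) + A k) (A k / _),
        div_mul_cancel₀ _ hd, mul_comm (a' (k + 1) + A k) (a' (k + 1) / _),
        div_mul_cancel₀ _ hd]
    have hI2 : A k • (y k - x (k + 1)) = a' (k + 1) • (w - u) := by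
      have h2 : A k • (y k - x (k + 1)) - a' (k + 1) • (w - u)
          = (A k • y k + a' (k + 1) • v k) - (a' (k + 1) + A k) • x (k + 1) := by
        rw [hw, hu]; module
      rw [← hxs, sub_self, sub_eq_zero] at h2
      exact h2
    -- strong convexity inequalities
    have hC1 : f xstar ≥ f (x (k + 1)) - ⟪g, w⟫ + μ / 2 * ‖w‖ ^ 2 := by
      have h := hstrong (x (k + 1)) xstar
      have he : xstar - x (k + 1) = -w := by rw [hw]; module
      rw [he, inner_neg_right, norm_neg] at h
      linarith
    have hC2 : A k * f (y k) ≥ A k * f (x (k + 1)) + a' (k + 1) * (⟪g, w⟫ - ⟪g, u⟫) := by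
      have h := hstrong (x (k + 1)) (y k)
      have hin : A k * ⟪g, y k - x (k + 1)⟫ = a' (k + 1) * (⟪g, w⟫ - ⟪g, u⟫) := by
        rw [← real_inner_smul_right, hI2, real_inner_smul_right, inner_sub_right]
      have hnn : (0:ℝ) ≤ μ / 2 * ‖y k - x (k + 1)‖ ^ 2 := by positivity
      nlinarith [mul_le_mul_of_nonneg_left
        (by linarith : f (x (k + 1)) + ⟪g, y k - x (k + 1)⟫ ≤ f (y k)) hAk.le]
    -- v recursion in difference form
    have hvd : B (k + 1) • (v (k + 1) - xstar)
        = B k • u + (a (k + 1) * μ) • w - a (k + 1) • g := by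
      have h1 := hvrec k
      rw [smul_sub, h1, hBsucc k, hu, hw]
      module
    have hnv : (B (k + 1)) ^ 2 * ‖v (k + 1) - xstar‖ ^ 2
        = ‖B k • u + (a (k + 1) * μ) • w - a (k + 1) • g‖ ^ 2 := by
      rw [← hvd, norm_smul, mul_pow, Real.norm_eq_abs, sq_abs]
    have hexp : ‖B k • u + (a (k + 1) * μ) • w - a (k + 1) • g‖ ^ 2
        = (B k) ^ 2 * ‖u‖ ^ 2 + (a (k + 1) * μ) ^ 2 * ‖w‖ ^ 2 + (a (k + 1)) ^ 2 * ‖g‖ ^ 2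
          + 2 * (B k) * (a (k + 1) * μ) * ⟪u, w⟫ - 2 * (B k) * (a (k + 1)) * ⟪g, u⟫
          - 2 * (a (k + 1) * μ) * (a (k + 1)) * ⟪g, w⟫ := by
      rw [← real_inner_self_eq_norm_sq]
      simp only [inner_add_left, inner_add_right, inner_sub_left, inner_sub_right,
        real_inner_smul_left, real_inner_smul_right, real_inner_self_eq_norm_sq,
        real_inner_comm w u, real_inner_comm u g, real_inner_comm w g,
        norm_smul, mul_pow, sq_abs, Real.norm_eq_abs]
      ring
    have huw : ‖u - w‖ ^ 2 = ‖u‖ ^ 2 + ‖w‖ ^ 2 - 2 * ⟪u, w⟫ := by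
      rw [← real_inner_self_eq_norm_sq]
      simp only [inner_sub_left, inner_sub_right, real_inner_self_eq_norm_sq,
        real_inner_comm w u]
      ring
    have hBne : B (k + 1) ≠ 0 := hBk1.ne'
    have h3 : ‖v (k + 1) - xstar‖ ^ 2
        = ((B k) ^ 2 * ‖u‖ ^ 2 + (a (k + 1) * μ) ^ 2 * ‖w‖ ^ 2 + (a (k + 1)) ^ 2 * ‖g‖ ^ 2
          + 2 * (B k) * (a (k + 1) * μ) * ⟪u, w⟫ - 2 * (B k) * (a (k + 1)) * ⟪g, u⟫
          - 2 * (a (k + 1) * μ) * (a (k + 1)) * ⟪g, w⟫) / (B (k + 1)) ^ 2 := by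
      rw [eq_div_iff (pow_ne_zero 2 hBne), mul_comm, hnv, hexp]
    have hkey : B (k + 1) / 2 * ‖v (k + 1) - xstar‖ ^ 2
        = B k / 2 * ‖u‖ ^ 2 + (a (k + 1)) ^ 2 * ‖g‖ ^ 2 / (2 * B (k + 1))
          + a' (k + 1) * (⟪g, w⟫ - ⟪g, u⟫) - a (k + 1) * ⟪g, w⟫
          + a (k + 1) * μ / 2 * ‖w‖ ^ 2
          - (a (k + 1) * μ * B k / (2 * B (k + 1))) * ‖u - w‖ ^ 2 := by
      rw [h3, huw, ha'e]
      have hBr : B (k + 1) = B k + a (k + 1) * μ := hBsucc k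
      rw [hBr]
      have hne2 : B k + a (k + 1) * μ ≠ 0 := by rw [← hBr]; exact hBne
      field_simp
      ring
    have t1 : (A k + a (k + 1)) * f (y (k + 1))
        ≤ (A k + a (k + 1)) * (f (x (k + 1)) - ‖g‖ ^ 2 / (2 * L)) := by
      rw [← hAsucc k]
      exact mul_le_mul_of_nonneg_left (hS (k + 1)) hAk1.le
    have t3 : a (k + 1) * (f (x (k + 1)) - ⟪g, w⟫ + μ / 2 * ‖w‖ ^ 2) ≤ a (k + 1) * f xstar :=
      mul_le_mul_of_nonneg_left hC1 hap.le
    have t5 : (A k + a (k + 1)) * (‖g‖ ^ 2 / (2 * L))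
        = (a (k + 1)) ^ 2 * ‖g‖ ^ 2 / (2 * B (k + 1)) := by
      rw [← hAsucc k]
      have h := haA k
      have hB1ne : B (k + 1) ≠ 0 := hBk1.ne'
      field_simp
      linear_combination (-‖g‖ ^ 2) * h
    have t6 : (0:ℝ) ≤ (a (k + 1) * μ * B k / (2 * B (k + 1))) * ‖u - w‖ ^ 2 := by positivity
    rw [hEdef (k + 1), hEdef k, hkey, hAsucc k]
    nlinarith [t1, t3, t5, t6, hC2]
  -- base case
  have hv0 : v 0 = y 0 := by
    have h := hvB 0
    rw [Finset.sum_range_one, Finset.sum_range_one, ha0, one_smul, one_smul] at h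
    rw [hB0] at h
    have h2 : L • y 0 = (L - μ) • x 0 + μ • x 0 - gradient f (x 0) := by
      rw [hy 0, smul_sub, smul_smul, mul_one_div, div_self hLne, one_smul]
      module
    exact smul_right_injective _ hLne (h.trans h2.symm)
  have hE0 : E 0 ≤ (L - μ) / 2 * ‖xstar - x 0‖ ^ 2 := by
    rw [hEdef 0, hA0, hB0, hv0, one_mul]
    have hS0 := hS 0
    have hC0 := hstrong (x 0) xstar
    have hey : y 0 - xstar = (x 0 - xstar) - (1 / L) • gradient f (x 0) := by
      rw [hy 0]; module
    have key2 : ∀ d gg : EuclideanSpace ℝ (Fin n),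
        ‖d - (1 / L) • gg‖ ^ 2 = ‖d‖ ^ 2 - 2 * (1 / L) * ⟪gg, d⟫ + (1 / L) ^ 2 * ‖gg‖ ^ 2 := by
      intro d gg
      rw [← real_inner_self_eq_norm_sq]
      simp only [inner_sub_left, inner_sub_right, real_inner_smul_left, real_inner_smul_right,
        real_inner_self_eq_norm_sq, real_inner_comm d gg, norm_smul, mul_pow, sq_abs,
        Real.norm_eq_abs]
      ring
    have hni : ‖y 0 - xstar‖ ^ 2 = ‖x 0 - xstar‖ ^ 2
        - 2 * (1 / L) * ⟪gradient f (x 0), x 0 - xstar⟫ + (1 / L) ^ 2 * ‖gradient f (x 0)‖ ^ 2 := by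
      rw [hey]; exact key2 _ _
    have hL2 : L / 2 * ‖y 0 - xstar‖ ^ 2 = L / 2 * ‖x 0 - xstar‖ ^ 2
        - ⟪gradient f (x 0), x 0 - xstar⟫ + ‖gradient f (x 0)‖ ^ 2 / (2 * L) := by
      rw [hni]; field_simp
    have hin0 : ⟪gradient f (x 0), xstar - x 0⟫ = -⟪gradient f (x 0), x 0 - xstar⟫ := by
      rw [← inner_neg_right, neg_sub]
    have hns : ‖xstar - x 0‖ = ‖x 0 - xstar‖ := norm_sub_rev _ _
    rw [hin0, hns] at hC0
    rw [hns]
    linarith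
  have hEk : ∀ k, E k ≤ (L - μ) / 2 * ‖xstar - x 0‖ ^ 2 := by
    intro k
    induction k with
    | zero => exact hE0
    | succ k ih => exact le_trans (hstep k) ih
  -- growth of A
  have hgrow1 : ∀ k : ℕ, ((k : ℝ) + 1) * ((k : ℝ) + 2) / 4 ≤ A k := by
    intro k
    induction k with
    | zero => rw [hA0]; norm_num
    | succ k ih =>
      have h2 : A (k + 1) ≤ a (k + 1) ^ 2 := by
        have h := haA k
        nlinarith [hBL (k + 1), hApos (k + 1)]
      have hax := hAsucc k
      have hap := ha (k + 1)
      have hk0 : (0:ℝ) ≤ (k : ℝ) := Nat.cast_nonneg k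
      push_cast
      nlinarith [ih, h2, hax, hap, mul_pos hap hap]
  have hqlt : Real.sqrt (μ / L) < 1 := by
    rw [show (1:ℝ) = Real.sqrt 1 from (Real.sqrt_one).symm]
    exact Real.sqrt_lt_sqrt (by positivity) (by rw [div_lt_one hL]; linarith)
  have hqnn : 0 ≤ Real.sqrt (μ / L) := Real.sqrt_nonneg _
  have hq2 : Real.sqrt (μ / L) ^ 2 = μ / L := Real.sq_sqrt (by positivity)
  have hgrow2 : ∀ k : ℕ, 1 ≤ (1 - Real.sqrt (μ / L)) ^ k * A k := by
    intro k
    induction k with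
    | zero => simp [hA0]
    | succ k ih =>
      have hap := ha (k + 1)
      have haq : Real.sqrt (μ / L) * A (k + 1) ≤ a (k + 1) := by
        have h := haA k
        have hB' : μ * A (k + 1) ≤ B (k + 1) := by rw [hBdef]; nlinarith [hApos (k + 1)]
        have h2 : Real.sqrt (μ / L) ^ 2 * A (k + 1) ^ 2 ≤ a (k + 1) ^ 2 := by
          rw [hq2, div_mul_eq_mul_div, div_le_iff₀ hL]
          nlinarith [hApos (k + 1)]
        nlinarith [mul_nonneg hqnn (hApos (k + 1)).le, hap]
      have hAle : A k ≤ (1 - Real.sqrt (μ / L)) * A (k + 1) := by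
        have := hAsucc k
        nlinarith
      have hpnn : (0:ℝ) ≤ (1 - Real.sqrt (μ / L)) ^ k := pow_nonneg (by linarith) k
      calc (1:ℝ) ≤ (1 - Real.sqrt (μ / L)) ^ k * A k := ih
        _ ≤ (1 - Real.sqrt (μ / L)) ^ k * ((1 - Real.sqrt (μ / L)) * A (k + 1)) :=
            mul_le_mul_of_nonneg_left hAle hpnn
        _ = (1 - Real.sqrt (μ / L)) ^ (k + 1) * A (k + 1) := by ring
  -- conclusion
  have hAkpos := hApos k
  have hC : (0:ℝ) ≤ (L - μ) / 2 * ‖xstar - x 0‖ ^ 2 :=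
    mul_nonneg (by linarith) (sq_nonneg _)
  have hEge : A k * (f (y k) - f xstar) ≤ E k := by
    rw [hEdef k]
    have : (0:ℝ) ≤ B k / 2 * ‖v k - xstar‖ ^ 2 :=
      mul_nonneg (by linarith [hBpos k]) (sq_nonneg _)
    linarith
  have h1 : f (y k) - f xstar ≤ ((L - μ) / 2 * ‖xstar - x 0‖ ^ 2) / A k := by
    rw [le_div_iff₀ hAkpos]
    nlinarith [hEge, hEk k]
  have hm : 1 / A k ≤ min (4 / (((k : ℝ) + 1) * ((k : ℝ) + 2))) ((1 - Real.sqrt (μ / L)) ^ k) := by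
    apply le_min
    · rw [div_le_div_iff₀ hAkpos (by positivity)]
      nlinarith [hgrow1 k]
    · rw [div_le_iff₀ hAkpos]
      linarith [hgrow2 k]
  calc f (y k) - f xstar ≤ ((L - μ) / 2 * ‖xstar - x 0‖ ^ 2) / A k := h1
    _ = (1 / A k) * ((L - μ) / 2 * ‖xstar - x 0‖ ^ 2) := by ring
    _ ≤ min (4 / (((k : ℝ) + 1) * ((k : ℝ) + 2))) ((1 - Real.sqrt (μ / L)) ^ k)
        * ((L - μ) / 2 * ‖xstar - x 0‖ ^ 2) := mul_le_mul_of_nonneg_right hm hC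
end

section
/- Let f : ℝⁿ → ℝ be differentiable, L-smooth and convex (μ = 0) with minimizer x*. Suppose a₀ = 1 and a_k² = A_k for k ≥ 1, and define the Nemirovski plane-search iteration: the query at step 0 is x₀, y_i = x_i − (1/L)∇f(x_i) for all i ≥ 0, v_i = x₀ − (1/L)Σ_{j=0}^i a_j∇f(x_j), and for i ≥ 1 the point x_i minimizes f over the plane {αy_{i−1} + βv_{i−1} : α, β ∈ ℝ} (assume such a minimizer exists). Then f(y_k) − f(x*) ≤ (4/((k+1)(k+2))) · (L/2)‖x* − x₀‖². -/
/-!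
The proof is a Lyapunov argument for the potential
`Φ_m = A_m (f(y_m) - f(x*)) + (L/2) ‖v_m - x*‖²`, which never exceeds its initial bound
`(L/2) ‖x₀ - x*‖²`. The plane search makes `∇f(x_{m+1})` orthogonal to `y_m - x_{m+1}` and to
`v_m - x_{m+1}`; with convexity and the descent lemma for the gradient step this gives
`Φ_{m+1} ≤ Φ_m` as soon as `a_{m+1}² ≤ A_{m+1}`. The choice `a_k² = A_k` in turn forces
`a_k ≥ (k+1)/2`, hence `A_k ≥ (k+1)(k+2)/4`.
-/

open RealInnerProductSpace Finset

section PlaneSearch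

variable {E : Type*} [NormedAddCommGroup E] [InnerProductSpace ℝ E] {f : E → ℝ} {L : ℝ}

theorem inner_eq_zero_of_forall_le_add_smul {z g d : E}
    (hsmooth : ∀ w, f w ≤ f z + ⟪g, w - z⟫ + L / 2 * ‖w - z‖ ^ 2)
    (hmin : ∀ t : ℝ, f z ≤ f (z + t • d)) : ⟪g, d⟫ = 0 := by
  have hquad : ∀ t : ℝ, 0 ≤ L / 2 * ‖d‖ ^ 2 * (t * t) + ⟪g, d⟫ * t + 0 := by
    intro t
    have h := hsmooth (z + t • d)
    rw [add_sub_cancel_left, real_inner_smul_right, norm_smul, Real.norm_eq_abs, mul_pow,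
      sq_abs] at h
    nlinarith [hmin t]
  have hdiscr := discrim_le_zero hquad
  rw [discrim] at hdiscr
  nlinarith [sq_nonneg ⟪g, d⟫]

theorem inner_sub_eq_zero_of_isMin_plane {g p q z : E}
    (hsmooth : ∀ w, f w ≤ f z + ⟪g, w - z⟫ + L / 2 * ‖w - z‖ ^ 2)
    (hmem : ∃ α β : ℝ, z = α • p + β • q) (hmin : ∀ α β : ℝ, f z ≤ f (α • p + β • q)) :
    ⟪g, p - z⟫ = 0 ∧ ⟪g, q - z⟫ = 0 := by
  obtain ⟨α, β, rfl⟩ := hmem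
  constructor
  · refine inner_eq_zero_of_forall_le_add_smul hsmooth fun t => ?_
    convert hmin ((1 - t) * α + t) ((1 - t) * β) using 2
    module
  · refine inner_eq_zero_of_forall_le_add_smul hsmooth fun t => ?_
    convert hmin ((1 - t) * α) ((1 - t) * β + t) using 2
    module

theorem le_sub_of_gradient_step {z g : E} (hL : L ≠ 0)
    (hsmooth : ∀ w, f w ≤ f z + ⟪g, w - z⟫ + L / 2 * ‖w - z‖ ^ 2) :
    f (z - (1 / L) • g) ≤ f z - ‖g‖ ^ 2 / (2 * L) := by
  have h := hsmooth (z - (1 / L) • g)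
  rw [sub_sub_cancel_left, inner_neg_right, real_inner_smul_right, real_inner_self_eq_norm_sq,
    norm_neg, norm_smul, Real.norm_eq_abs, mul_pow, sq_abs] at h
  convert h using 1
  field_simp
  ring

theorem potential_step_le {A a : ℝ} {z g y v xstar : E} (hL : 0 < L) (hA : 0 ≤ A) (ha : 0 ≤ a)
    (ha_sq : a ^ 2 ≤ A + a)
    (hsmooth : ∀ w, f w ≤ f z + ⟪g, w - z⟫ + L / 2 * ‖w - z‖ ^ 2)
    (hconv : ∀ w, f w ≥ f z + ⟪g, w - z⟫)
    (hy : ⟪g, y - z⟫ = 0) (hv : ⟪g, v - z⟫ = 0) :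
    (A + a) * (f (z - (1 / L) • g) - f xstar) + L / 2 * ‖v - (a / L) • g - xstar‖ ^ 2 ≤
      A * (f y - f xstar) + L / 2 * ‖v - xstar‖ ^ 2 := by
  have hdescent := le_sub_of_gradient_step hL.ne' hsmooth
  have hy_ge : f z ≤ f y := by linarith [hconv y]
  have hstar_ge : f z - f xstar ≤ ⟪g, z - xstar⟫ := by
    have h := hconv xstar
    rw [← neg_sub z xstar, inner_neg_right] at h
    linarith
  have hdist : L / 2 * ‖v - (a / L) • g - xstar‖ ^ 2 =
      L / 2 * ‖v - xstar‖ ^ 2 - a * ⟪g, z - xstar⟫ + a ^ 2 * ‖g‖ ^ 2 / (2 * L) := by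
    have hvz : ⟪v - xstar, g⟫ = ⟪g, z - xstar⟫ := by
      rw [real_inner_comm, ← sub_add_sub_cancel v z xstar, inner_add_right, hv, zero_add]
    rw [sub_right_comm, norm_sub_sq_real, real_inner_smul_right, hvz, norm_smul,
      Real.norm_eq_abs, mul_pow, sq_abs]
    field_simp
  have hgrad : a ^ 2 * ‖g‖ ^ 2 / (2 * L) ≤ (A + a) * (‖g‖ ^ 2 / (2 * L)) := by
    rw [mul_div_assoc]
    exact mul_le_mul_of_nonneg_right ha_sq (by positivity)
  rw [hdist]
  linarith [mul_le_mul_of_nonneg_left hdescent (add_nonneg hA ha),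
    mul_le_mul_of_nonneg_left hy_ge hA, mul_le_mul_of_nonneg_left hstar_ge ha]

theorem potential_le {g : E → E} {a A : ℕ → ℝ} {x y v : ℕ → E} {xstar : E} (hL : 0 < L)
    (ha : ∀ i, 0 ≤ a i) (hA : ∀ i, A i = ∑ j ∈ range (i + 1), a j) (ha_sq : ∀ i, a i ^ 2 ≤ A i)
    (hsmooth : ∀ z w, f w ≤ f z + ⟪g z, w - z⟫ + L / 2 * ‖w - z‖ ^ 2)
    (hconv : ∀ z w, f w ≥ f z + ⟪g z, w - z⟫)
    (hy : ∀ i, y i = x i - (1 / L) • g (x i))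
    (hv : ∀ i, v i = x 0 - (1 / L) • ∑ j ∈ range (i + 1), a j • g (x j))
    (horth : ∀ i, ⟪g (x (i + 1)), y i - x (i + 1)⟫ = 0 ∧ ⟪g (x (i + 1)), v i - x (i + 1)⟫ = 0)
    (m : ℕ) : A m * (f (y m) - f xstar) + L / 2 * ‖v m - xstar‖ ^ 2 ≤ L / 2 * ‖x 0 - xstar‖ ^ 2 := by
  have hA_nonneg : ∀ i, 0 ≤ A i := fun i => (hA i).symm ▸ sum_nonneg fun j _ => ha j
  induction m with
  | zero =>
    have h := potential_step_le (A := 0) (y := x 0) (v := x 0) (xstar := xstar) hL le_rfl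
      (ha 0) (by simpa [hA] using ha_sq 0) (hsmooth (x 0)) (hconv (x 0)) (by simp) (by simp)
    have hv0 : v 0 = x 0 - (a 0 / L) • g (x 0) := by
      rw [hv, sum_range_one, smul_smul, one_div_mul_eq_div]
    simpa [hA, hy, hv0] using h
  | succ i ih =>
    have hAsucc : A (i + 1) = A i + a (i + 1) := by rw [hA, hA, sum_range_succ]
    have hvsucc : v (i + 1) = v i - (a (i + 1) / L) • g (x (i + 1)) := by
      rw [hv, hv, sum_range_succ, smul_add, smul_smul, one_div_mul_eq_div, sub_add_eq_sub_sub]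
    have h := potential_step_le (xstar := xstar) hL (hA_nonneg i) (ha (i + 1))
      (hAsucc ▸ ha_sq (i + 1)) (hsmooth _) (hconv _) (horth i).1 (horth i).2
    rw [hAsucc, hy, hvsucc]
    exact h.trans ih

end PlaneSearch

theorem mul_div_four_le_of_le_sq {a A : ℕ → ℝ} (hA0 : 1 / 2 ≤ A 0)
    (hAsucc : ∀ i, A (i + 1) = A i + a (i + 1)) (ha : ∀ i, 0 < a (i + 1))
    (hsq : ∀ i, A (i + 1) ≤ a (i + 1) ^ 2) (m : ℕ) :
    ((m : ℝ) + 1) * ((m : ℝ) + 2) / 4 ≤ A m := by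
  induction m with
  | zero => norm_num [hA0]
  | succ i ih =>
    have hai : ((i : ℝ) + 2) / 2 ≤ a (i + 1) := by
      by_contra! hlt
      nlinarith [hsq i, hAsucc i, ha i, (Nat.cast_nonneg i : (0 : ℝ) ≤ i)]
    rw [hAsucc]
    push_cast
    linarith

theorem nemirovski_plane_search_convergence_general {n : ℕ}
    (f : EuclideanSpace ℝ (Fin n) → ℝ) (L : ℝ) (hL : 0 < L)
    (hsmooth : ∀ x y : EuclideanSpace ℝ (Fin n),
      f y ≤ f x + ⟪gradient f x, y - x⟫ + L / 2 * ‖y - x‖ ^ 2)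
    (hconv : ∀ x y : EuclideanSpace ℝ (Fin n),
      f y ≥ f x + ⟪gradient f x, y - x⟫)
    (xstar : EuclideanSpace ℝ (Fin n)) (hstar : ∀ x, f xstar ≤ f x)
    (a A : ℕ → ℝ) (ha : ∀ i, 0 < a i)
    (hA : ∀ i, A i = ∑ j ∈ Finset.range (i + 1), a j)
    (ha0 : a 0 = 1) (hak : ∀ k, 1 ≤ k → a k ^ 2 = A k)
    (x y v : ℕ → EuclideanSpace ℝ (Fin n))
    (hy : ∀ i, y i = x i - (1 / L) • gradient f (x i))
    (hv : ∀ i, v i = x 0 - (1 / L) • ∑ j ∈ Finset.range (i + 1), a j • gradient f (x j))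
    (hx : ∀ i, 1 ≤ i →
      (∃ α β : ℝ, x i = α • y (i - 1) + β • v (i - 1)) ∧
      (∀ α β : ℝ, f (x i) ≤ f (α • y (i - 1) + β • v (i - 1))))
    (k : ℕ) :
    f (y k) - f xstar ≤
      4 / (((k : ℝ) + 1) * ((k : ℝ) + 2)) * (L / 2 * ‖xstar - x 0‖ ^ 2) := by
  have hA0 : A 0 = 1 := by simp [hA, ha0]
  have ha_sq : ∀ i, a i ^ 2 ≤ A i
    | 0 => by simp [hA0, ha0]
    | i + 1 => (hak (i + 1) i.succ_pos).le
  have horth : ∀ i, ⟪gradient f (x (i + 1)), y i - x (i + 1)⟫ = 0 ∧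
      ⟪gradient f (x (i + 1)), v i - x (i + 1)⟫ = 0 := fun i => by
    obtain ⟨hmem, hmin⟩ := hx (i + 1) i.succ_pos
    exact inner_sub_eq_zero_of_isMin_plane (hsmooth _) hmem hmin
  have hpot := potential_le (xstar := xstar) hL (fun i => (ha i).le) hA ha_sq hsmooth hconv hy hv
    horth k
  have hAk := mul_div_four_le_of_le_sq (by linarith) (fun i => by rw [hA, hA, sum_range_succ])
    (fun i => ha (i + 1)) (fun i => (hak (i + 1) i.succ_pos).ge) k
  have hgap : 0 ≤ f (y k) - f xstar := sub_nonneg.2 (hstar _)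
  rw [norm_sub_rev, div_mul_eq_mul_div, le_div_iff₀ (by positivity)]
  have hdist : 0 ≤ L / 2 * ‖v k - xstar‖ ^ 2 := by positivity
  linarith [mul_le_mul_of_nonneg_right hAk hgap]

/-- **Convergence of Nemirovski's accelerated method with a plane search**
(smooth convex case, `μ = 0`). Here `y_i = x_i - (1/L) ∇f(x_i)`,
`v_i = x₀ - (1/L) Σ_{j≤i} a_j ∇f(x_j)`, and for `i ≥ 1` the point `x_i` minimizes `f`
over the plane spanned by `y_{i-1}` and `v_{i-1}`. Then
`f (y k) - f x* ≤ (4/((k+1)(k+2))) (L/2) ‖x* - x₀‖²`. -/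
theorem nemirovski_plane_search_convergence {n : ℕ}
    (f : EuclideanSpace ℝ (Fin n) → ℝ) (L : ℝ) (hL : 0 < L)
    (hdiff : Differentiable ℝ f)
    (hsmooth : ∀ x y : EuclideanSpace ℝ (Fin n),
      f y ≤ f x + ⟪gradient f x, y - x⟫ + L / 2 * ‖y - x‖ ^ 2)
    (hconv : ∀ x y : EuclideanSpace ℝ (Fin n),
      f y ≥ f x + ⟪gradient f x, y - x⟫)
    (xstar : EuclideanSpace ℝ (Fin n)) (hstar : ∀ x, f xstar ≤ f x)
    (a A : ℕ → ℝ) (ha : ∀ i, 0 < a i)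
    (hA : ∀ i, A i = ∑ j ∈ Finset.range (i + 1), a j)
    (ha0 : a 0 = 1) (hak : ∀ k, 1 ≤ k → a k ^ 2 = A k)
    (x y v : ℕ → EuclideanSpace ℝ (Fin n))
    (hy : ∀ i, y i = x i - (1 / L) • gradient f (x i))
    (hv : ∀ i, v i = x 0 - (1 / L) • ∑ j ∈ Finset.range (i + 1), a j • gradient f (x j))
    (hx : ∀ i, 1 ≤ i →
      (∃ α β : ℝ, x i = α • y (i - 1) + β • v (i - 1)) ∧
      (∀ α β : ℝ, f (x i) ≤ f (α • y (i - 1) + β • v (i - 1))))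
    (k : ℕ) :
    f (y k) - f xstar ≤
      4 / (((k : ℝ) + 1) * ((k : ℝ) + 2)) * (L / 2 * ‖xstar - x 0‖ ^ 2) :=
  nemirovski_plane_search_convergence_general f L hL hsmooth hconv xstar hstar a A ha hA ha0 hak x y
    v hy hv hx k
end

section
/- Let f : ℝⁿ → ℝ be differentiable, L-smooth and convex (μ = 0) with minimizer x*. Suppose a₀ = 1 and a_k² = A_k for k ≥ 1, and define the Nemirovski line-search iteration: the query at step 0 is x₀, y_i = x_i − (1/L)∇f(x_i) for all i ≥ 0, v_i = x₀ − (1/L)Σ_{j=0}^i a_j∇f(x_j), and for i ≥ 1 the point x_i minimizes f over the line {(1 − β)y_{i−1} + βv_{i−1} : β ∈ ℝ} (assume such a minimizer exists). Then f(y_k) − f(x*) ≤ (4/((k+1)(k+2))) · (L/2)‖x* − x₀‖². -/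
set_option maxHeartbeats 1000000


open RealInnerProductSpace Finset

/-- **Convergence of Nemirovski's accelerated method with a line search**
(smooth convex case, `μ = 0`). -/
theorem nemirovski_line_search_convergence {n : ℕ}
    (f : EuclideanSpace ℝ (Fin n) → ℝ) (L : ℝ) (hL : 0 < L)
    (hdiff : Differentiable ℝ f)
    (hsmooth : ∀ x y : EuclideanSpace ℝ (Fin n),
      f y ≤ f x + ⟪gradient f x, y - x⟫ + L / 2 * ‖y - x‖ ^ 2)
    (hconv : ∀ x y : EuclideanSpace ℝ (Fin n),
      f y ≥ f x + ⟪gradient f x, y - x⟫)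
    (xstar : EuclideanSpace ℝ (Fin n)) (hstar : ∀ x, f xstar ≤ f x)
    (a A : ℕ → ℝ) (ha : ∀ i, 0 < a i)
    (hA : ∀ i, A i = ∑ j ∈ Finset.range (i + 1), a j)
    (ha0 : a 0 = 1) (hak : ∀ k, 1 ≤ k → a k ^ 2 = A k)
    (x y v : ℕ → EuclideanSpace ℝ (Fin n))
    (hy : ∀ i, y i = x i - (1 / L) • gradient f (x i))
    (hv : ∀ i, v i = x 0 - (1 / L) • ∑ j ∈ Finset.range (i + 1), a j • gradient f (x j))
    (hx : ∀ i, 1 ≤ i →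
      (∃ β : ℝ, x i = (1 - β) • y (i - 1) + β • v (i - 1)) ∧
      (∀ β : ℝ, f (x i) ≤ f ((1 - β) • y (i - 1) + β • v (i - 1))))
    (k : ℕ) :
    f (y k) - f xstar ≤
      4 / (((k : ℝ) + 1) * ((k : ℝ) + 2)) * (L / 2 * ‖xstar - x 0‖ ^ 2) := by
  have hLne : L ≠ 0 := ne_of_gt hL
  set g : ℕ → EuclideanSpace ℝ (Fin n) := fun j => gradient f (x j) with hg
  -- descent lemma
  have hdesc : ∀ j, f (y j) ≤ f (x j) - 1 / (2 * L) * ‖g j‖ ^ 2 := by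
    intro j
    have h := hsmooth (x j) (y j)
    have hyx : y j - x j = -((1 / L) • g j) := by rw [hy j]; abel
    rw [hyx] at h
    have h1 : ⟪g j, -((1 / L) • g j)⟫ = -(1 / L * ‖g j‖ ^ 2) := by
      rw [inner_neg_right, real_inner_smul_right, real_inner_self_eq_norm_sq]
    have h2 : ‖-((1 / L) • g j)‖ ^ 2 = (1 / L) ^ 2 * ‖g j‖ ^ 2 := by
      rw [norm_neg, norm_smul, mul_pow, Real.norm_eq_abs, sq_abs]
    rw [h1, h2] at h
    have h3 : L / 2 * ((1 / L) ^ 2 * ‖g j‖ ^ 2) = 1 / (2 * L) * ‖g j‖ ^ 2 := by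
      field_simp
    have h4 : 1 / L * ‖g j‖ ^ 2 = 2 * (1 / (2 * L) * ‖g j‖ ^ 2) := by
      field_simp
    rw [h3, h4] at h
    linarith
  -- monotonicity from line search with β = 0
  have hmono : ∀ i, f (x (i + 1)) ≤ f (y i) := by
    intro i
    have h := (hx (i + 1) (by omega)).2 0
    simpa using h
  -- orthogonality
  have horth : ∀ i, ⟪g (i + 1), v i - y i⟫ = 0 := by
    intro i
    obtain ⟨⟨β₀, hβ₀⟩, hmin⟩ := hx (i + 1) (by omega)
    simp only [Nat.add_sub_cancel] at hβ₀ hmin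
    have hc : ∀ β : ℝ, (1 - β) • y i + β • v i = y i + β • (v i - y i) := by
      intro β; module
    have hβ₀' : x (i + 1) = y i + β₀ • (v i - y i) := by rw [hβ₀, hc]
    set φ : ℝ → ℝ := fun β => f (y i + β • (v i - y i)) with hφ
    have hlocmin : IsLocalMin φ β₀ := by
      apply Filter.Eventually.of_forall
      intro β
      have := hmin β
      rw [hc β] at this
      simpa [hφ, ← hβ₀'] using this
    have hline : HasDerivAt (fun β : ℝ => y i + β • (v i - y i)) (v i - y i) β₀ := by
      have := ((hasDerivAt_id β₀).smul_const (v i - y i)).const_add (y i)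
      simpa using this
    have hder : HasDerivAt φ (fderiv ℝ f (x (i + 1)) (v i - y i)) β₀ := by
      have := (hdiff (y i + β₀ • (v i - y i))).hasFDerivAt.comp_hasDerivAt β₀ hline
      rw [← hβ₀'] at this
      exact this
    have h0 := hlocmin.hasDerivAt_eq_zero hder
    have hfd : fderiv ℝ f (x (i + 1)) (v i - y i) = ⟪g (i + 1), v i - y i⟫ := by
      have hgr := (hdiff (x (i + 1))).hasGradientAt.hasFDerivAt
      rw [hgr.fderiv]
      rw [InnerProductSpace.toDual_apply_apply]
    rw [hfd] at h0
    exact h0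
  -- inner product with x_{i+1} - v i vanishes
  have hxv : ∀ i, ⟪g (i + 1), x (i + 1) - v i⟫ = 0 := by
    intro i
    obtain ⟨⟨β₀, hβ₀⟩, _⟩ := hx (i + 1) (by omega)
    simp only [Nat.add_sub_cancel] at hβ₀
    have : x (i + 1) - v i = (1 - β₀) • (y i - v i) := by rw [hβ₀]; module
    rw [this, real_inner_smul_right]
    have : ⟪g (i + 1), y i - v i⟫ = 0 := by
      have h := horth i
      have : y i - v i = -(v i - y i) := by abel
      rw [this, inner_neg_right, h, neg_zero]
    rw [this, mul_zero]
  -- v recursion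
  have hvrec : ∀ i, v (i + 1) = v i - (a (i + 1) / L) • g (i + 1) := by
    intro i
    rw [hv, hv, Finset.sum_range_succ]
    module
  -- norm expansion step
  have hstep : ∀ i, L / 2 * ‖xstar - v (i + 1)‖ ^ 2 =
      L / 2 * ‖xstar - v i‖ ^ 2 + a (i + 1) * ⟪g (i + 1), xstar - v i⟫ +
        a (i + 1) ^ 2 / (2 * L) * ‖g (i + 1)‖ ^ 2 := by
    intro i
    have hsub : xstar - v (i + 1) = (xstar - v i) + (a (i + 1) / L) • g (i + 1) := by
      rw [hvrec i]; abel
    rw [hsub, norm_add_sq_real, real_inner_smul_right, norm_smul, mul_pow,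
      Real.norm_eq_abs, sq_abs, real_inner_comm]
    field_simp
  -- A facts
  have hA0 : A 0 = 1 := by rw [hA]; simp [ha0]
  have hArec : ∀ i, A (i + 1) = A i + a (i + 1) := by
    intro i; rw [hA, hA, Finset.sum_range_succ]
  have hApos : ∀ i, 0 < A i := by
    intro i
    rw [hA]
    exact Finset.sum_pos (fun j _ => ha j) (by simp)
  have hAsq : ∀ i, a i ^ 2 = A i := by
    intro i
    cases i with
    | zero => rw [ha0, hA0]; norm_num
    | succ m => exact hak (m + 1) (by omega)
  -- potential induction
  have hpot : ∀ i, A i * (f (y i) - f xstar) + L / 2 * ‖xstar - v i‖ ^ 2 ≤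
      L / 2 * ‖xstar - x 0‖ ^ 2 := by
    intro i
    induction i with
    | zero =>
      have hv0 : v 0 = x 0 - (1 / L) • g 0 := by
        rw [hv]; simp [ha0]; rfl
      have hsub : xstar - v 0 = (xstar - x 0) + (1 / L) • g 0 := by
        rw [hv0]; abel
      have hexp : L / 2 * ‖xstar - v 0‖ ^ 2 =
          L / 2 * ‖xstar - x 0‖ ^ 2 + ⟪g 0, xstar - x 0⟫ + 1 / (2 * L) * ‖g 0‖ ^ 2 := by
        rw [hsub, norm_add_sq_real, real_inner_smul_right, norm_smul, mul_pow,
          Real.norm_eq_abs, sq_abs, real_inner_comm]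
        field_simp
      have hcv := hconv (x 0) xstar
      have hd := hdesc 0
      rw [hA0, hexp]
      linarith
    | succ m ih =>
      have hs := hstep m
      have hcv := hconv (x (m + 1)) xstar
      have hsplit : ⟪g (m + 1), xstar - x (m + 1)⟫ =
          ⟪g (m + 1), xstar - v m⟫ - ⟪g (m + 1), x (m + 1) - v m⟫ := by
        rw [← inner_sub_right]
        congr 1
        abel
      rw [hsplit, hxv m, sub_zero] at hcv
      have hd := hdesc (m + 1)
      have hm := hmono m
      have h1 : A m * f (x (m + 1)) ≤ A m * f (y m) :=
        mul_le_mul_of_nonneg_left hm (hApos m).le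
      have h2 : a (m + 1) * (f (x (m + 1)) - f xstar) ≤
          a (m + 1) * (-⟪g (m + 1), xstar - v m⟫) := by
        apply mul_le_mul_of_nonneg_left _ (ha (m + 1)).le
        linarith
      have h3 : A (m + 1) * (f (y (m + 1)) - f (x (m + 1))) ≤
          A (m + 1) * (-(1 / (2 * L) * ‖g (m + 1)‖ ^ 2)) := by
        apply mul_le_mul_of_nonneg_left _ (hApos (m + 1)).le
        linarith
      have hAr := hArec m
      have hAs := hAsq (m + 1)
      have hcoef : a (m + 1) ^ 2 / (2 * L) * ‖g (m + 1)‖ ^ 2 =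
          A (m + 1) * (1 / (2 * L) * ‖g (m + 1)‖ ^ 2) := by
        rw [hAs]; ring
      rw [hcoef] at hs
      rw [hArec m] at hs h3 ⊢
      linarith [hs, h1, h2, h3, ih]
  -- growth of A
  have hAgrow : ∀ i : ℕ, ((i : ℝ) + 1) * ((i : ℝ) + 2) / 4 ≤ A i := by
    intro i
    induction i with
    | zero => rw [hA0]; norm_num
    | succ m ih =>
      have h1 : a (m + 1) ^ 2 = A m + a (m + 1) := by rw [hAsq, hArec]
      have h2 := ha (m + 1)
      have hA' := hApos m
      have ha1 : 1 < a (m + 1) := by nlinarith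
      have hsq : ((m : ℝ) + 3 / 2) ^ 2 ≤ (2 * a (m + 1) - 1) ^ 2 := by nlinarith [ih]
      have hpos2 : (0 : ℝ) < (2 * a (m + 1) - 1) + ((m : ℝ) + 3 / 2) := by
        have : (0:ℝ) ≤ (m:ℝ) := Nat.cast_nonneg m
        linarith
      have ha2 : (m : ℝ) + 3 / 2 ≤ 2 * a (m + 1) - 1 := by nlinarith [hsq, hpos2]
      rw [hArec m]
      push_cast
      nlinarith [ih, ha2]
  -- conclude
  have hk := hpot k
  have hfy : 0 ≤ f (y k) - f xstar := by linarith [hstar (y k)]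
  have hvnn : 0 ≤ L / 2 * ‖xstar - v k‖ ^ 2 := by positivity
  have hpos : (0 : ℝ) < ((k : ℝ) + 1) * ((k : ℝ) + 2) := by positivity
  rw [div_mul_eq_mul_div, le_div_iff₀ hpos]
  have hmul : ((k : ℝ) + 1) * ((k : ℝ) + 2) / 4 * (f (y k) - f xstar) ≤
      A k * (f (y k) - f xstar) :=
    mul_le_mul_of_nonneg_right (hAgrow k) hfy
  linarith [hmul, hk, hvnn]
end

section
/- The gradients of f at the conjugate-gradient iterates are pairwise orthogonal: for all k and i with i < k, ⟨∇f(y_k), ∇f(y_i)⟩ = 0. -/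
/-!
The gradient `T y - b` of `f(y) = ½⟪T y, y⟫ - ⟪b, y⟫` at a minimiser over an affine subspace
`x₀ + V` is orthogonal to `V`. Since `x*` minimises `f` globally, `T x* = b`, so
`T y_i - b = T (y_i - x₀) + T (x₀ - x*)` lies in `K_{i+1} ⊆ K_k` for `i < k`; hence it is
orthogonal to the gradient at `y_k`.
-/

open RealInnerProductSpace

section Krylov

variable {R M : Type*} [CommSemiring R] [AddCommMonoid M] [Module R M]

def krylov (T : M →ₗ[R] M) (r : M) (k : ℕ) : Submodule R M :=
  Submodule.span R ((fun j => (T ^ j) r) '' Set.Icc 1 k)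

theorem krylov_mono (T : M →ₗ[R] M) (r : M) : Monotone (krylov T r) := fun _ _ hkl =>
  Submodule.span_mono <| Set.image_mono <| Set.Icc_subset_Icc_right hkl

theorem apply_mem_krylov (T : M →ₗ[R] M) (r : M) {k : ℕ} (hk : 1 ≤ k) :
    T r ∈ krylov T r k :=
  Submodule.subset_span ⟨1, ⟨le_rfl, hk⟩, pow_one T ▸ rfl⟩

theorem map_krylov_le (T : M →ₗ[R] M) (r : M) (k : ℕ) :
    (krylov T r k).map T ≤ krylov T r (k + 1) := by
  rw [krylov, Submodule.map_span, ← Set.image_comp]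
  refine Submodule.span_le.mpr ?_
  rintro _ ⟨j, ⟨hj1, hjk⟩, rfl⟩
  refine Submodule.subset_span ⟨j + 1, ⟨by omega, by omega⟩, ?_⟩
  simp only [Function.comp_apply, pow_succ', Module.End.mul_apply]

end Krylov

theorem eq_zero_of_forall_mul_add_sq_nonneg {c q : ℝ} (h : ∀ t : ℝ, 0 ≤ t * c + t ^ 2 * q) :
    c = 0 := by
  have hdisc : discrim q c 0 ≤ 0 := discrim_le_zero fun t => by nlinarith [h t]
  rw [discrim] at hdisc
  nlinarith [sq_nonneg c]

section Quadratic

variable {E : Type*} [NormedAddCommGroup E] [InnerProductSpace ℝ E]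

noncomputable def quadObjective (T : E →ₗ[ℝ] E) (b x : E) : ℝ :=
  1 / 2 * ⟪T x, x⟫ - ⟪b, x⟫

variable {T : E →ₗ[ℝ] E} (hT : T.IsSymmetric) (b : E)
include hT

theorem quadObjective_add_smul (x v : E) (t : ℝ) :
    quadObjective T b (x + t • v) =
      quadObjective T b x + t * ⟪T x - b, v⟫ + t ^ 2 / 2 * ⟪T v, v⟫ := by
  have hsymm : ⟪T v, x⟫ = ⟪T x, v⟫ := by rw [hT v x, real_inner_comm]
  simp only [quadObjective, map_add, map_smul, inner_add_left, inner_add_right,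
    real_inner_smul_left, real_inner_smul_right, inner_sub_left, hsymm]
  ring

theorem inner_sub_eq_zero_of_forall_le_add {V : Submodule ℝ E} {x : E}
    (hmin : ∀ w ∈ V, quadObjective T b x ≤ quadObjective T b (x + w)) {v : E} (hv : v ∈ V) :
    ⟪T x - b, v⟫ = 0 :=
  eq_zero_of_forall_mul_add_sq_nonneg (q := ⟪T v, v⟫ / 2) fun t => by
    have := hmin (t • v) (V.smul_mem t hv)
    rw [quadObjective_add_smul hT] at this
    linarith

theorem apply_eq_of_forall_quadObjective_le {xstar : E}
    (hstar : ∀ z, quadObjective T b xstar ≤ quadObjective T b z) :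
    T xstar = b := by
  have h := inner_sub_eq_zero_of_forall_le_add hT b (V := ⊤) (fun w _ => hstar _)
    (Submodule.mem_top (x := T xstar - b))
  exact sub_eq_zero.mp (inner_self_eq_zero.mp h)

end Quadratic

theorem cg_gradients_orthogonal_general {n : ℕ}
    (T : EuclideanSpace ℝ (Fin n) →ₗ[ℝ] EuclideanSpace ℝ (Fin n))
    (hTsymm : ∀ z w, ⟪T z, w⟫ = ⟪z, T w⟫)
    (b : EuclideanSpace ℝ (Fin n))
    (f : EuclideanSpace ℝ (Fin n) → ℝ)
    (hf : ∀ z, f z = 1 / 2 * ⟪T z, z⟫ - ⟪b, z⟫)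
    (xstar : EuclideanSpace ℝ (Fin n)) (hstar : ∀ z, f xstar ≤ f z)
    (x0 : EuclideanSpace ℝ (Fin n))
    (K : ℕ → Submodule ℝ (EuclideanSpace ℝ (Fin n)))
    (hK : ∀ k, K k = Submodule.span ℝ ((fun j => (T ^ j) (x0 - xstar)) '' Set.Icc 1 k))
    (y : ℕ → EuclideanSpace ℝ (Fin n)) (hy0 : y 0 = x0)
    (hy : ∀ k, 1 ≤ k → y k - x0 ∈ K k ∧ ∀ z, z - x0 ∈ K k → f (y k) ≤ f z) :
    ∀ k i : ℕ, i < k → ⟪T (y k) - b, T (y i) - b⟫ = 0 := by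
  obtain rfl : f = quadObjective T b := funext hf
  obtain rfl : K = krylov T (x0 - xstar) := funext hK
  intro k i hik
  have hbstar : T xstar = b := apply_eq_of_forall_quadObjective_le hTsymm b hstar
  have hyK : y i - x0 ∈ krylov T (x0 - xstar) i := by
    rcases Nat.eq_zero_or_pos i with rfl | hi
    · simp [hy0]
    · exact (hy i hi).1
  have hgrad : T (y i) - b ∈ krylov T (x0 - xstar) (i + 1) := by
    have hsplit : T (y i) - b = T (y i - x0) + T (x0 - xstar) := by
      rw [← hbstar, ← map_add, ← map_sub, sub_add_sub_cancel]
    rw [hsplit]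
    exact add_mem (map_krylov_le T _ i ⟨_, hyK, rfl⟩) (apply_mem_krylov T _ i.succ_pos)
  refine inner_sub_eq_zero_of_forall_le_add hTsymm b (fun w hw => (hy k (by omega)).2 _ ?_)
    (krylov_mono T _ hik hgrad)
  rw [add_sub_right_comm]
  exact add_mem (hy k (by omega)).1 hw

/-- **Orthogonality of CG gradients.** The gradients `∇f(y_k) = T y_k - b` of the
conjugate-gradient iterates are pairwise orthogonal: `⟪T y_k - b, T y_i - b⟫ = 0`
whenever `i < k`. -/
theorem cg_gradients_orthogonal {n : ℕ}
    (T : EuclideanSpace ℝ (Fin n) →ₗ[ℝ] EuclideanSpace ℝ (Fin n))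
    (hTsymm : ∀ z w, ⟪T z, w⟫ = ⟪z, T w⟫)
    (L μ : ℝ) (hL : 0 < L) (hμ : 0 ≤ μ)
    (hmin : ∀ z, μ * ‖z‖ ^ 2 ≤ ⟪T z, z⟫)
    (hmax : ∀ z, ⟪T z, z⟫ ≤ L * ‖z‖ ^ 2)
    (b : EuclideanSpace ℝ (Fin n)) (hb : b ∈ LinearMap.range T)
    (f : EuclideanSpace ℝ (Fin n) → ℝ)
    (hf : ∀ z, f z = 1 / 2 * ⟪T z, z⟫ - ⟪b, z⟫)
    (xstar : EuclideanSpace ℝ (Fin n)) (hstar : ∀ z, f xstar ≤ f z)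
    (x0 : EuclideanSpace ℝ (Fin n))
    (K : ℕ → Submodule ℝ (EuclideanSpace ℝ (Fin n)))
    (hK : ∀ k, K k = Submodule.span ℝ ((fun j => (T ^ j) (x0 - xstar)) '' Set.Icc 1 k))
    (y : ℕ → EuclideanSpace ℝ (Fin n)) (hy0 : y 0 = x0)
    (hy : ∀ k, 1 ≤ k → y k - x0 ∈ K k ∧ ∀ z, z - x0 ∈ K k → f (y k) ≤ f z) :
    ∀ k i : ℕ, i < k → ⟪T (y k) - b, T (y i) - b⟫ = 0 :=
  cg_gradients_orthogonal_general T hTsymm b f hf xstar hstar x0 K hK y hy0 hy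
end

section
/- For every i ≥ 1 and every point x ∈ x₀ + K_{i−1}, the conjugate-gradient iterate y_i satisfies f(y_i) ≤ f(x) − ‖∇f(x)‖²/(2L). -/
open RealInnerProductSpace Finset

/-- **CG dominates a gradient step.** For every `i ≥ 1` and every `z ∈ x₀ + K_{i-1}`,
the conjugate-gradient iterate satisfies `f (y i) ≤ f z - ‖∇f(z)‖²/(2L)`,
where `∇f(z) = T z - b`. -/
theorem cg_dominates_gradient_step {n : ℕ}
    (T : EuclideanSpace ℝ (Fin n) →ₗ[ℝ] EuclideanSpace ℝ (Fin n))
    (hTsymm : ∀ z w, ⟪T z, w⟫ = ⟪z, T w⟫)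
    (L μ : ℝ) (hL : 0 < L) (hμ : 0 ≤ μ)
    (hmin : ∀ z, μ * ‖z‖ ^ 2 ≤ ⟪T z, z⟫)
    (hmax : ∀ z, ⟪T z, z⟫ ≤ L * ‖z‖ ^ 2)
    (b : EuclideanSpace ℝ (Fin n)) (hb : b ∈ LinearMap.range T)
    (f : EuclideanSpace ℝ (Fin n) → ℝ)
    (hf : ∀ z, f z = 1 / 2 * ⟪T z, z⟫ - ⟪b, z⟫)
    (xstar : EuclideanSpace ℝ (Fin n)) (hstar : ∀ z, f xstar ≤ f z)
    (x0 : EuclideanSpace ℝ (Fin n))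
    (K : ℕ → Submodule ℝ (EuclideanSpace ℝ (Fin n)))
    (hK : ∀ k, K k = Submodule.span ℝ ((fun j => (T ^ j) (x0 - xstar)) '' Set.Icc 1 k))
    (y : ℕ → EuclideanSpace ℝ (Fin n)) (hy0 : y 0 = x0)
    (hy : ∀ k, 1 ≤ k → y k - x0 ∈ K k ∧ ∀ z, z - x0 ∈ K k → f (y k) ≤ f z) :
    ∀ i, 1 ≤ i → ∀ z : EuclideanSpace ℝ (Fin n), z - x0 ∈ K (i - 1) →
      f (y i) ≤ f z - ‖T z - b‖ ^ 2 / (2 * L) := by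
  -- First: T xstar = b  (gradient vanishes at the minimizer)
  have hxs : T xstar = b := by
    set g : EuclideanSpace ℝ (Fin n) := T xstar - b with hgdef
    have hgg : ⟪T xstar, g⟫ - ⟪b, g⟫ = ‖g‖ ^ 2 := by
      rw [← inner_sub_left, ← hgdef, real_inner_self_eq_norm_sq]
    have key : ∀ t : ℝ, 0 ≤ t ^ 2 / 2 * ⟪T g, g⟫ + t * ‖g‖ ^ 2 := by
      intro t
      have h1 := hstar (xstar + t • g)
      rw [hf, hf] at h1
      have hsy : ⟪T g, xstar⟫ = ⟪T xstar, g⟫ := by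
        rw [hTsymm]; exact real_inner_comm _ _
      simp only [map_add, map_smul, inner_add_left, inner_add_right,
        real_inner_smul_left, real_inner_smul_right] at h1
      have hgg' : t * (⟪T xstar, g⟫ - ⟪b, g⟫) = t * ‖g‖ ^ 2 := by rw [hgg]
      rw [hsy] at h1
      linarith [h1, hgg']
    have h3 := hmax g
    have h4 : ‖g‖ ^ 2 ≤ 0 := by
      set a := ⟪T g, g⟫ with ha
      set c := ‖g‖ ^ 2 with hc
      have h2 := key (-(1/L))
      have e : (-(1/L)) ^ 2 / 2 * a + (-(1/L)) * c = (a - 2*L*c) / (2*L^2) := by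
        field_simp
        ring
      rw [e, le_div_iff₀ (by positivity)] at h2
      nlinarith [h2, h3, hL]
    have h5 : g = 0 := by
      have := sq_nonneg ‖g‖
      have : ‖g‖ = 0 := by nlinarith
      exact norm_eq_zero.mp this
    exact sub_eq_zero.mp h5
  intro i hi z hz
  set g : EuclideanSpace ℝ (Fin n) := T z - b with hgdef
  have hKmono : K (i - 1) ≤ K i := by
    rw [hK, hK]
    apply Submodule.span_mono
    apply Set.image_mono
    intro j hj
    exact ⟨hj.1, le_trans hj.2 (Nat.sub_le i 1)⟩
  have hTmap : ∀ v ∈ K (i - 1), T v ∈ K i := by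
    have hle : K (i - 1) ≤ (K i).comap T := by
      rw [hK (i - 1), Submodule.span_le]
      rintro w ⟨j, hj, rfl⟩
      simp only [Submodule.mem_comap, SetLike.mem_coe]
      have hpow : T ((T ^ j) (x0 - xstar)) = (T ^ (j + 1)) (x0 - xstar) := by
        rw [pow_succ']; rfl
      rw [hpow, hK i]
      exact Submodule.subset_span ⟨j + 1, ⟨by omega, by
        have := hj.2; simp only [Set.mem_Icc] at hj; omega⟩, rfl⟩
    exact fun v hv => hle hv
  have hT1 : T (x0 - xstar) ∈ K i := by
    rw [hK i]
    exact Submodule.subset_span ⟨1, ⟨le_refl 1, hi⟩, by simp⟩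
  have hgK : g ∈ K i := by
    have e : g = T (z - x0) + T (x0 - xstar) := by
      rw [← map_add]
      have : z - x0 + (x0 - xstar) = z - xstar := by abel
      rw [this, map_sub, hxs]
    rw [e]
    exact Submodule.add_mem _ (hTmap _ hz) hT1
  set z' : EuclideanSpace ℝ (Fin n) := z - (1 / L) • g with hz'def
  have hz'K : z' - x0 ∈ K i := by
    have e : z' - x0 = (z - x0) + (-(1 / L)) • g := by
      rw [hz'def, neg_smul]; abel
    rw [e]
    exact Submodule.add_mem _ (hKmono hz) (Submodule.smul_mem _ _ hgK)
  have step := (hy i hi).2 z' hz'K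
  have key : f z' = f z - (1 / L) * ‖g‖ ^ 2 + (1 / L) ^ 2 / 2 * ⟪T g, g⟫ := by
    rw [hf, hf]
    have hsy : ⟪T g, z⟫ = ⟪T z, g⟫ := by
      rw [hTsymm]; exact real_inner_comm _ _
    have hgg : ⟪T z, g⟫ - ⟪b, g⟫ = ‖g‖ ^ 2 := by
      rw [← inner_sub_left, ← hgdef, real_inner_self_eq_norm_sq]
    simp only [hz'def, map_sub, map_smul, inner_sub_left, inner_sub_right,
      real_inner_smul_left, real_inner_smul_right]
    rw [hsy]
    linear_combination (-(1 / L)) * hgg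
  have harith : (1 / L) ^ 2 / 2 * ⟪T g, g⟫ ≤ 1 / L * ‖g‖ ^ 2 - ‖g‖ ^ 2 / (2 * L) := by
    have e : 1 / L * ‖g‖ ^ 2 - ‖g‖ ^ 2 / (2 * L) = (1 / L) ^ 2 / 2 * (L * ‖g‖ ^ 2) := by
      field_simp
      ring
    rw [e]
    exact mul_le_mul_of_nonneg_left (hmax g) (by positivity)
  calc f (y i) ≤ f z' := step
    _ ≤ f z - ‖g‖ ^ 2 / (2 * L) := by rw [key]; linarith [harith]
end
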